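/- arXiv:2207.02629 — 4 statements merged into one kernel-verified Lean document; each statement's English description precedes it below -/
import Mathlib

section
/- In any rooted acyclic digraph N in which every node is reachable from the root, every non-leaf node has outdegree at most 2 and indegree at most 2, and every non-leaf node has at least one child of indegree one (the tree-child property), every non-leaf node v admits a directed path from v to some leaf consisting entirely of edges whose endpoints have indegree one (tree edges). -/
/-- A rooted, leaf-labeled digraph: a candidate phylogenetic network on taxon set `X`. -/
structure Net (V : Type) (X : Type) where
  E : V → V → Prop
  root : V
  leaf : X → V

namespace Net

variable {V X : Type}

/-- Indegree of a vertex. -/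
noncomputable def inDeg (N : Net V X) (v : V) : ℕ := {u | N.E u v}.ncard

/-- Outdegree of a vertex. -/
noncomputable def outDeg (N : Net V X) (v : V) : ℕ := {w | N.E v w}.ncard

def IsLeaf (N : Net V X) (v : V) : Prop := N.outDeg v = 0

/-- A tree node: indegree at most one. -/
def IsTreeNode (N : Net V X) (v : V) : Prop := N.inDeg v ≤ 1

/-- A reticulate node: indegree two (or more, in the non-binary case: indegree ≥ 2). -/
def IsRet (N : Net V X) (v : V) : Prop := 2 ≤ N.inDeg v

def Acyclic (N : Net V X) : Prop := ∀ v, ¬ Relation.TransGen N.E v v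

/-- Common well-formedness conditions of a rooted phylogenetic network:
acyclic, rooted, every node reachable from the root, leaves bijectively labeled by `X`. -/
structure IsPhylo (N : Net V X) : Prop where
  acyclic : N.Acyclic
  rootIn : N.inDeg N.root = 0
  reach : ∀ v, Relation.ReflTransGen N.E N.root v
  leafInj : Function.Injective N.leaf
  leafIsLeaf : ∀ x, N.IsLeaf (N.leaf x)
  leafSurj : ∀ v, N.IsLeaf v → ∃ x, N.leaf x = v
  leafIn : ∀ x, N.inDeg (N.leaf x) = 1

/-- A binary phylogenetic network: every non-leaf node is either a tree node
(indegree ≤ 1, outdegree 2) or a reticulate node (indegree 2, outdegree 1). -/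
structure IsBinaryNet (N : Net V X) extends IsPhylo N : Prop where
  deg : ∀ v, ¬ N.IsLeaf v →
    (N.inDeg v ≤ 1 ∧ N.outDeg v = 2) ∨ (N.inDeg v = 2 ∧ N.outDeg v = 1)

/-- Tree-child property: every non-leaf node has a child that is a tree node. -/
def TreeChild (N : Net V X) : Prop :=
  ∀ v, ¬ N.IsLeaf v → ∃ w, N.E v w ∧ N.IsTreeNode w

/-- A binary phylogenetic tree: a binary phylogenetic network without reticulate nodes. -/
def IsBinaryTree (N : Net V X) : Prop := N.IsBinaryNet ∧ ∀ v, N.inDeg v ≤ 1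

/-- A tree edge: an edge entering a tree node. -/
def TreeEdge (N : Net V X) (u v : V) : Prop := N.E u v ∧ N.IsTreeNode v

/-- The tree component rooted at `x`: all nodes reachable from `x` via tree edges. -/
def comp (N : Net V X) (x : V) : Set V := {v | Relation.ReflTransGen N.TreeEdge x v}

/-- `u` and `v` lie in a common tree component. -/
def InSameComp (N : Net V X) (u v : V) : Prop :=
  ∃ x, (x = N.root ∨ N.IsRet x) ∧ u ∈ N.comp x ∧ v ∈ N.comp x

/-- The taxa `x` and `y` form a cherry: their leaves share a common parent. -/
def HasCherry (N : Net V X) (x y : X) : Prop :=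
  x ≠ y ∧ ∃ p, N.E p (N.leaf x) ∧ N.E p (N.leaf y)

/-- The set of cherries of a tree, as unordered pairs of taxa. -/
def cherries (N : Net V X) : Set (Sym2 X) :=
  {p | ∃ x y, p = s(x, y) ∧ N.HasCherry x y}

/-- The tree has the 3-subtree `((a,b),c)`: a node whose two children are the leaf `c`
and the parent of the cherry `(a,b)`. -/
def Has3Subtree (N : Net V X) (a b c : X) : Prop :=
  a ≠ b ∧ a ≠ c ∧ b ≠ c ∧
  ∃ v p, N.E v p ∧ N.E v (N.leaf c) ∧ N.E p (N.leaf a) ∧ N.E p (N.leaf b)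

def IsAncestor (N : Net V X) (u v : V) : Prop := Relation.ReflTransGen N.E u v

/-- `l` is the least common ancestor of `u` and `v`. -/
def IsLCA (N : Net V X) (l u v : V) : Prop :=
  N.IsAncestor l u ∧ N.IsAncestor l v ∧
  ∀ w, N.IsAncestor w u → N.IsAncestor w v → N.IsAncestor w l

end Net

/-- Paths in `S` from `a` to `b` whose vertices other than `a` and `b` avoid the set `A`. -/
def pathAvoid {V : Type} (S : V → V → Prop) (A : Set V) (a b : V) : Prop :=
  Relation.ReflTransGen (fun u v => S u v ∧ (v = b ∨ v ∉ A)) a b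

/-- `T` is displayed in `N`: `N` contains a subdivision of `T` preserving the leaf labels,
i.e. `T` is obtained from `N` by deleting all but one incoming edge at each reticulate node,
pruning nodes without labeled leaf descendants, and suppressing degree-two nodes. -/
def Display {VT V X : Type} (T : Net VT X) (N : Net V X) : Prop :=
  ∃ (S : V → V → Prop) (φ : VT → V),
    (∀ u v, S u v → N.E u v) ∧
    Function.Injective φ ∧
    (∀ x, φ (T.leaf x) = N.leaf x) ∧
    (∀ a b, T.E a b → pathAvoid S (Set.range φ) (φ a) (φ b)) ∧
    (∀ a : VT, {w | S (φ a) w}.ncard = T.outDeg a ∧ {u | S u (φ a)}.ncard = T.inDeg a) ∧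
    (∀ v : V, v ∉ Set.range φ → ((∃ u, S u v) ∨ (∃ w, S v w)) →
      {w | S v w}.ncard = 1 ∧ {u | S u v}.ncard = 1)

/-- `N` displays the cherry `(x, y)`: some binary tree displayed in `N` has `(x,y)` as a cherry. -/
def DisplaysCherry {V X : Type} (N : Net V X) (x y : X) : Prop :=
  ∃ (VT : Type) (T : Net VT X),
    Finite VT ∧ T.IsBinaryTree ∧ Display T N ∧ T.HasCherry x y

/-- `N` displays the 3-subtree `((a,b),c)`. -/
def Displays3Subtree {V X : Type} (N : Net V X) (a b c : X) : Prop :=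
  ∃ (VT : Type) (T : Net VT X),
    Finite VT ∧ T.IsBinaryTree ∧ Display T N ∧ T.Has3Subtree a b c

/-- Isomorphism of leaf-labeled rooted digraphs. -/
def NetIso {V1 V2 X : Type} (N1 : Net V1 X) (N2 : Net V2 X) : Prop :=
  ∃ f : V1 ≃ V2, (∀ u v, N1.E u v ↔ N2.E (f u) (f v)) ∧
    f N1.root = N2.root ∧ ∀ x, f (N1.leaf x) = N2.leaf x

/-- In a rooted acyclic digraph in which every node is reachable from the root,
non-leaf nodes have indegree and outdegree at most 2, and every non-leaf node has a child of
indegree one (tree-child), every non-leaf node has a directed all-tree-edge path to a leaf. -/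
theorem stmt_3 {V X : Type} [Fintype V] (N : Net V X)
    (hac : N.Acyclic)
    (hreach : ∀ v, Relation.ReflTransGen N.E N.root v)
    (hdeg : ∀ v, ¬ N.IsLeaf v → N.outDeg v ≤ 2 ∧ N.inDeg v ≤ 2)
    (htc : N.TreeChild) :
    ∀ v, ¬ N.IsLeaf v → ∃ l, N.IsLeaf l ∧ Relation.ReflTransGen N.TreeEdge v l := by
  have hwf : WellFounded (fun a b : V => Relation.TransGen N.E b a) := by
    have : IsIrrefl V (fun a b : V => Relation.TransGen N.E b a) :=
      ⟨fun a h => hac a h⟩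
    have : IsTrans V (fun a b : V => Relation.TransGen N.E b a) :=
      ⟨fun a b c h1 h2 => h2.trans h1⟩
    exact Finite.wellFounded_of_trans_of_irrefl _
  intro v
  induction v using hwf.induction with
  | _ v ih =>
    intro hv
    obtain ⟨w, hvw, hw⟩ := htc v hv
    by_cases hwl : N.IsLeaf w
    · exact ⟨w, hwl, Relation.ReflTransGen.single ⟨hvw, hw⟩⟩
    · obtain ⟨l, hl, hpath⟩ := ih w (Relation.TransGen.single hvw) hwl
      exact ⟨l, hl, Relation.ReflTransGen.head ⟨hvw, hw⟩ hpath⟩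
end

section
/- A binary tree-child phylogenetic network on n taxa has at most n−1 reticulate nodes. -/
/-- A binary tree-child phylogenetic network on `n` taxa has at most `n - 1` reticulate nodes. -/
theorem stmt_5 {V X : Type} [Fintype V] [Fintype X] (N : Net V X)
    (hN : N.IsBinaryNet) (htc : N.TreeChild) :
    {v : V | N.IsRet v}.ncard ≤ Fintype.card X - 1 := by
  classical
  -- well-foundedness of the child relation
  have hwf : WellFounded (fun a b : V => N.E b a) := by
    haveI : IsTrans V (fun a b : V => Relation.TransGen N.E b a) :=
      ⟨fun a b c h1 h2 => h2.trans h1⟩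
    haveI : IsIrrefl V (fun a b : V => Relation.TransGen N.E b a) :=
      ⟨fun a h => hN.acyclic a h⟩
    exact Subrelation.wf (fun {a b} h => Relation.TransGen.single h)
      (Finite.wellFounded_of_trans_of_irrefl _)
  -- unique parents of tree nodes
  have huniq : ∀ w, N.IsTreeNode w → ∀ u u', N.E u w → N.E u' w → u = u' := by
    intro w hw u u' hu hu'
    have hfin : {u | N.E u w}.Finite := Set.toFinite _
    exact (Set.ncard_le_one hfin).1 hw u hu u' hu'
  -- no edges into the root
  have hroot : ∀ u, ¬ N.E u N.root := by
    intro u hu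
    have h0 : {u | N.E u N.root} = ∅ := by
      have := hN.rootIn
      rw [Net.inDeg, Set.ncard_eq_zero (Set.toFinite _)] at this
      exact this
    exact absurd hu (by rw [Set.eq_empty_iff_forall_notMem] at h0; exact h0 u)
  -- every vertex has a tree path to a leaf
  have hA : ∀ v : V, ∃ l, N.IsLeaf l ∧ Relation.ReflTransGen N.TreeEdge v l := by
    intro v
    induction v using WellFounded.induction hwf with
    | _ v ih =>
      by_cases hv : N.IsLeaf v
      · exact ⟨v, hv, Relation.ReflTransGen.refl⟩
      · obtain ⟨w, hw, hwt⟩ := htc v hv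
        obtain ⟨l, hl, hp⟩ := ih w hw
        exact ⟨l, hl, Relation.ReflTransGen.head ⟨hw, hwt⟩ hp⟩
  -- chain lemma: tree paths into a common vertex are comparable
  have hchain : ∀ l v, Relation.ReflTransGen N.TreeEdge v l →
      ∀ v', Relation.ReflTransGen N.TreeEdge v' l →
        Relation.ReflTransGen N.TreeEdge v v' ∨ Relation.ReflTransGen N.TreeEdge v' v := by
    intro l v h
    induction h using Relation.ReflTransGen.head_induction_on with
    | refl => intro v' h'; exact Or.inr h'
    | head hac hcb ih =>
      rename_i a c
      intro v' h'
      rcases ih v' h' with h1 | h1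
      · exact Or.inl (Relation.ReflTransGen.head hac h1)
      · rcases Relation.ReflTransGen.cases_tail h1 with rfl | ⟨u, hvu, huc⟩
        · exact Or.inl (Relation.ReflTransGen.single hac)
        · have : u = a := huniq c hac.2 u a huc.1 hac.1
          subst this
          exact Or.inr hvu
  -- a nontrivial tree path ends in a tree node
  have hend : ∀ v w, Relation.ReflTransGen N.TreeEdge v w → v ≠ w → N.IsTreeNode w := by
    intro v w h hne
    rcases Relation.ReflTransGen.cases_tail h with rfl | ⟨u, _, huw⟩
    · exact absurd rfl hne
    · exact huw.2
  -- choose the leaf and its label for each vertex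
  choose L hLleaf hLpath using hA
  have hx : ∀ v, ∃ x : X, N.leaf x = L v := fun v => hN.leafSurj _ (hLleaf v)
  choose g hg using hx
  -- reticulations are not tree nodes
  have hretnt : ∀ v, N.IsRet v → ¬ N.IsTreeNode v := by
    intro v hv hvt; exact absurd (le_trans hv hvt) (by norm_num)
  -- same label implies same leaf, hence comparable start points
  have hgl : ∀ v w, g v = g w → L v = L w := by
    intro v w h; rw [← hg v, ← hg w, h]
  -- key injectivity on reticulations
  have hinj : Set.InjOn g {v : V | N.IsRet v} := by
    intro v hv w hw hgvw
    have hLvw : L v = L w := hgl v w hgvw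
    have h1 := hLpath v
    have h2 := hLpath w
    rw [hLvw] at h1
    rcases hchain (L w) v h1 w h2 with h | h
    · by_contra hne
      exact hretnt w hw (hend v w h hne)
    · by_contra hne
      exact hretnt v hv (hend w v h (Ne.symm hne))
  -- reticulation labels avoid the root's label
  have havoid : ∀ v, N.IsRet v → g v ≠ g N.root := by
    intro v hv heq
    have hLvr : L v = L N.root := hgl v N.root heq
    have h1 := hLpath v
    have h2 := hLpath N.root
    rw [hLvr] at h1
    rcases hchain (L N.root) v h1 N.root h2 with h | h
    · -- path from v to root; v ≠ root since root has indegree 0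
      have hne : v ≠ N.root := by
        intro h'; subst h'
        have : (2 : ℕ) ≤ 0 := by rw [← hN.rootIn]; exact hv
        omega
      rcases Relation.ReflTransGen.cases_tail h with h' | ⟨u, _, hur⟩
      · exact hne h'.symm
      · exact hroot u hur.1
    · -- path from root to v; v is ret, not a tree node
      have hne : N.root ≠ v := by
        intro h'; rw [← h'] at hv
        have : (2 : ℕ) ≤ 0 := by rw [← hN.rootIn]; exact hv
        omega
      exact hretnt v hv (hend N.root v h hne)
  -- conclude by counting
  have hmaps : ∀ v ∈ {v : V | N.IsRet v}, g v ∈ {x : X | x ≠ g N.root} :=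
    fun v hv => havoid v hv
  have hle := Set.ncard_le_ncard_of_injOn g hmaps hinj (Set.toFinite _)
  have hcard : ({x : X | x ≠ g N.root} : Set X).ncard = Fintype.card X - 1 := by
    have : ({x : X | x ≠ g N.root} : Set X) = Set.univ \ {g N.root} := by
      ext x; simp [Set.mem_diff]
    rw [this, Set.ncard_diff (by simp) (Set.toFinite _)]
    simp [Set.ncard_univ, Nat.card_eq_fintype_card]
  rw [hcard] at hle
  exact hle
end

section
/- The total number of distinct cherries (unordered pairs of taxa) displayed in a binary tree-child phylogenetic network on n taxa is at most 2n−3. Consequently, if a set 𝒯 of binary phylogenetic trees on n taxa is simultaneously displayed in some binary tree-child network, then the number of distinct cherries occurring among the trees of 𝒯 is at most 2n−3. -/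
/-!
A displayed cherry `(x, y)` must sit at an internal tree vertex `v` of `N`: `x` and `y` are the
leaves reached from the two children of `v` by *forced walks*, which leave a reticulation through
its only child and a vertex with a reticulate child through its other child, since a displayed
tree can only suppress such paths. Hence there are at most as many displayed cherries as internal
tree vertices, of which there are `n + r - 1`, `r` being the number of reticulations. The `2r`
parents of reticulations are distinct internal tree vertices, so `r ≤ n - 1`. In the extremal
case every internal tree vertex has a reticulate child; then all strict ancestors of a highest
reticulation lie on the forced walk from the root, so its two parents carry the same cherry.
-/

open Relation Finset

theorem Finset.ncard_setOf_exists_le_card {α β : Type*} {R : α → β → Prop}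
    (hR : Relator.RightUnique R) (s : Finset α) : {b | ∃ a ∈ s, R a b}.ncard ≤ #s := by
  rcases s.eq_empty_or_nonempty with rfl | ⟨a₀, -⟩
  · simp
  have : Nonempty α := ⟨a₀⟩
  choose! f hfs hf using fun b (hb : ∃ a ∈ s, R a b) => hb
  calc {b | ∃ a ∈ s, R a b}.ncard ≤ (s : Set α).ncard :=
        Set.ncard_le_ncard_of_injOn f hfs
          (fun b hb b' hb' h => hR (hf b hb) (h ▸ hf b' hb')) s.finite_toSet
    _ = #s := Set.ncard_coe_finset s

theorem Finset.ncard_setOf_exists_le_card_sub_one {α β : Type*} [DecidableEq α]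
    {R : α → β → Prop} (hR : Relator.RightUnique R) {s : Finset α} {a₁ a₂ : α} (h₁ : a₁ ∈ s)
    (h₂ : a₂ ∈ s) (hne : a₁ ≠ a₂) (heq : R a₁ = R a₂) :
    {b | ∃ a ∈ s, R a b}.ncard ≤ #s - 1 := by
  have hset : {b | ∃ a ∈ s, R a b} = {b | ∃ a ∈ s.erase a₁, R a b} := by
    ext b
    constructor
    · rintro ⟨a, ha, hab⟩
      by_cases h : a = a₁
      · subst h
        exact ⟨a₂, mem_erase.2 ⟨hne.symm, h₂⟩, heq ▸ hab⟩
      · exact ⟨a, mem_erase.2 ⟨h, ha⟩, hab⟩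
    · rintro ⟨a, ha, hab⟩
      exact ⟨a, mem_of_mem_erase ha, hab⟩
  rw [hset, ← card_erase_of_mem h₁]
  exact ncard_setOf_exists_le_card hR _

namespace Net

variable {V X : Type} {N : Net V X}

lemma isTreeNode_iff_not_isRet {v : V} : N.IsTreeNode v ↔ ¬ N.IsRet v := by
  unfold IsTreeNode IsRet
  omega

lemma TreeChild.exists_child_not_isRet (htc : N.TreeChild) {v : V} (hv : ¬ N.IsLeaf v) :
    ∃ w, N.E v w ∧ ¬ N.IsRet w := by
  obtain ⟨w, hvw, hw⟩ := htc v hv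
  exact ⟨w, hvw, isTreeNode_iff_not_isRet.1 hw⟩

lemma IsPhylo.not_isRet_of_isLeaf (hN : N.IsPhylo) {v : V} (hv : N.IsLeaf v) : ¬ N.IsRet v := by
  obtain ⟨x, rfl⟩ := hN.leafSurj v hv
  unfold IsRet
  rw [hN.leafIn x]
  omega

lemma IsPhylo.root_not_isLeaf (hN : N.IsPhylo) : ¬ N.IsLeaf N.root := fun hl => by
  obtain ⟨x, hx⟩ := hN.leafSurj _ hl
  have := hN.leafIn x
  rw [hx, hN.rootIn] at this
  omega

lemma IsPhylo.root_not_isRet (hN : N.IsPhylo) : ¬ N.IsRet N.root := by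
  unfold IsRet
  rw [hN.rootIn]
  omega

lemma IsPhylo.exists_edge_of_ne_root (hN : N.IsPhylo) {v : V} (hv : v ≠ N.root) :
    ∃ u, N.E u v := by
  obtain h | ⟨u, -, hu⟩ := (hN.reach v).cases_tail
  · exact absurd h hv
  · exact ⟨u, hu⟩

lemma IsBinaryNet.outDeg_eq_two (hN : N.IsBinaryNet) {v : V} (hl : ¬ N.IsLeaf v)
    (hr : ¬ N.IsRet v) : N.outDeg v = 2 := by
  rcases hN.deg v hl with ⟨-, h⟩ | ⟨h, -⟩
  · exact h
  · exact absurd (by unfold IsRet; omega) hr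

lemma IsBinaryNet.degrees_of_isRet (hN : N.IsBinaryNet) {v : V} (hr : N.IsRet v) :
    N.inDeg v = 2 ∧ N.outDeg v = 1 := by
  rcases hN.deg v fun hl => hN.not_isRet_of_isLeaf hl hr with ⟨h, -⟩ | h
  · unfold IsRet at hr
    omega
  · exact h

lemma IsBinaryNet.exists_edge_ne (hN : N.IsBinaryNet) {v : V} (hl : ¬ N.IsLeaf v)
    (hr : ¬ N.IsRet v) (d : V) : ∃ e, N.E v e ∧ e ≠ d :=
  have := hN.outDeg_eq_two hl hr
  Set.exists_ne_of_one_lt_ncard (s := {w | N.E v w}) (by unfold outDeg at this; omega) d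

section Finite

variable [Finite V]

lemma not_isLeaf_of_edge {v w : V} (h : N.E v w) : ¬ N.IsLeaf v := fun hl =>
  Set.eq_empty_iff_forall_notMem.1 ((Set.ncard_eq_zero (Set.toFinite _)).1 hl) w h

lemma eq_of_edge_of_not_isRet {u u' v : V} (hv : ¬ N.IsRet v) (hu : N.E u v)
    (hu' : N.E u' v) : u = u' :=
  (Set.ncard_le_one_iff (s := {u | N.E u v}) (Set.toFinite _)).1
    (by unfold IsRet inDeg at hv; omega) hu hu'

lemma eq_of_edge_of_outDeg_le_one {v w w' : V} (hv : N.outDeg v ≤ 1) (hw : N.E v w)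
    (hw' : N.E v w') : w = w' :=
  (Set.ncard_le_one_iff (Set.toFinite _)).1 hv hw hw'

lemma eq_or_eq_of_outDeg_eq_two {v a b c : V} (hv : N.outDeg v = 2) (ha : N.E v a)
    (hb : N.E v b) (hab : a ≠ b) (hc : N.E v c) : c = a ∨ c = b := by
  by_contra! hne
  have hsub : ({c, a, b} : Set V) ⊆ {w | N.E v w} := by
    rintro _ (rfl | rfl | rfl) <;> assumption
  have := Set.ncard_le_ncard hsub (Set.toFinite _)
  rw [Set.ncard_insert_of_notMem (by simp [hne.1, hne.2]), Set.ncard_pair hab] at this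
  unfold outDeg at hv
  omega

lemma IsPhylo.inDeg_ne_zero (hN : N.IsPhylo) {v : V} (hv : v ≠ N.root) : N.inDeg v ≠ 0 := by
  obtain ⟨u, hu⟩ := hN.exists_edge_of_ne_root hv
  exact ((Set.ncard_pos (Set.toFinite _)).2 ⟨u, hu⟩).ne'

lemma IsPhylo.inDeg_eq_one (hN : N.IsPhylo) {v : V} (hv : v ≠ N.root) (hr : ¬ N.IsRet v) :
    N.inDeg v = 1 := by
  have := hN.inDeg_ne_zero hv
  unfold IsRet at hr
  omega

lemma Acyclic.wellFounded (h : N.Acyclic) : WellFounded (TransGen N.E) :=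
  have : Std.Irrefl (TransGen N.E) := ⟨h⟩
  Finite.wellFounded_of_trans_of_irrefl _

lemma Acyclic.wellFounded_flip (h : N.Acyclic) : WellFounded (flip (TransGen N.E)) :=
  have : IsTrans V (flip (TransGen N.E)) := ⟨fun _ _ _ h h' => h'.trans h⟩
  have : Std.Irrefl (flip (TransGen N.E)) := ⟨h⟩
  Finite.wellFounded_of_trans_of_irrefl _

lemma IsBinaryNet.eq_of_edge_of_isRet (hN : N.IsBinaryNet) {v w w' : V} (hv : N.IsRet v)
    (hw : N.E v w) (hw' : N.E v w') : w = w' :=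
  eq_of_edge_of_outDeg_le_one (hN.degrees_of_isRet hv).2.le hw hw'

lemma IsBinaryNet.eq_or_eq_of_edge (hN : N.IsBinaryNet) {v a b c : V} (hl : ¬ N.IsLeaf v)
    (hr : ¬ N.IsRet v) (ha : N.E v a) (hb : N.E v b) (hab : a ≠ b) (hc : N.E v c) :
    c = a ∨ c = b :=
  eq_or_eq_of_outDeg_eq_two (hN.outDeg_eq_two hl hr) ha hb hab hc

lemma IsBinaryNet.eq_of_edge_of_isRet_sibling (hN : N.IsBinaryNet) {v e c c' : V}
    (hve : N.E v e) (he : N.IsRet e) (hc : N.E v c) (hc' : N.E v c') (hcr : ¬ N.IsRet c)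
    (hcr' : ¬ N.IsRet c') : c = c' := by
  by_cases hv : N.IsRet v
  · exact hN.eq_of_edge_of_isRet hv hc hc'
  have hce : c ≠ e := fun h => hcr (h ▸ he)
  rcases hN.eq_or_eq_of_edge (not_isLeaf_of_edge hve) hv hc hve hce hc' with h | h
  · exact h.symm
  · exact absurd (h ▸ he) hcr'

lemma IsBinaryNet.not_isRet_of_edge_isRet (hN : N.IsBinaryNet) (htc : N.TreeChild) {u b : V}
    (hub : N.E u b) (hb : N.IsRet b) : ¬ N.IsRet u := fun hu => by
  obtain ⟨w, huw, hw⟩ := htc.exists_child_not_isRet (not_isLeaf_of_edge hub)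
  exact hw (hN.eq_of_edge_of_isRet hu hub huw ▸ hb)

lemma IsBinaryNet.eq_of_edge_of_isRet_of_isRet (hN : N.IsBinaryNet) (htc : N.TreeChild)
    {v b b' : V} (hb : N.E v b) (hb' : N.E v b') (hbr : N.IsRet b) (hbr' : N.IsRet b') :
    b = b' := by
  by_contra hne
  have hl := not_isLeaf_of_edge hb
  obtain ⟨w, hw, hwr⟩ := htc.exists_child_not_isRet hl
  rcases hN.eq_or_eq_of_edge hl (hN.not_isRet_of_edge_isRet htc hb hbr) hb hb' hne hw
    with rfl | rfl
  · exact hwr hbr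
  · exact hwr hbr'

end Finite

/-- The steps that a displayed tree cannot branch off: out of a reticulation, or out of a
vertex with a reticulate child into its other child. -/
def ForcedStep (N : Net V X) (c d : V) : Prop :=
  N.E c d ∧ (N.IsRet c ∨ ¬ N.IsRet d ∧ ∃ e, N.E c e ∧ N.IsRet e)

def ForcedWalk (N : Net V X) (c : V) (x : X) : Prop :=
  ReflTransGen N.ForcedStep c (N.leaf x)

def CherryAt (N : Net V X) (v : V) (p : Sym2 X) : Prop :=
  ∃ a b x y, N.E v a ∧ N.E v b ∧ N.ForcedWalk a x ∧ N.ForcedWalk b y ∧ x ≠ y ∧ p = s(x, y)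

lemma reflTransGen_forcedStep_of_forall_transGen {b : V}
    (hA : ∀ u, TransGen N.E u b → ¬ N.IsRet u ∧ ∃ e, N.E u e ∧ N.IsRet e) {u w : V}
    (huw : ReflTransGen N.E u w) (hw : TransGen N.E w b) : ReflTransGen N.ForcedStep u w := by
  induction huw with
  | refl => exact .refl
  | tail _ hqw ih =>
    exact (ih (.head hqw hw)).tail ⟨hqw, .inr ⟨(hA _ hw).1, (hA _ (.head hqw hw)).2⟩⟩

section Finite

variable [Finite V]

lemma IsBinaryNet.forcedStep_rightUnique (hN : N.IsBinaryNet) :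
    Relator.RightUnique N.ForcedStep := by
  rintro c d d' ⟨hd, hc⟩ ⟨hd', hc'⟩
  by_cases hcr : N.IsRet c
  · exact hN.eq_of_edge_of_isRet hcr hd hd'
  obtain ⟨hdr, e, he, her⟩ := hc.resolve_left hcr
  exact hN.eq_of_edge_of_isRet_sibling he her hd hd' hdr (hc'.resolve_left hcr).1

lemma IsBinaryNet.eq_of_reflTransGen_forcedStep (hN : N.IsBinaryNet) {x : X} {d : V}
    (h : ReflTransGen N.ForcedStep (N.leaf x) d) : d = N.leaf x := by
  rcases h.cases_head with h | ⟨e, he, -⟩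
  · exact h.symm
  · exact absurd (hN.leafIsLeaf x) (not_isLeaf_of_edge he.1)

lemma IsBinaryNet.forcedWalk_unique (hN : N.IsBinaryNet) {c : V} {x y : X}
    (hx : N.ForcedWalk c x) (hy : N.ForcedWalk c y) : x = y := by
  rcases ReflTransGen.total_of_right_unique hN.forcedStep_rightUnique hx hy with h | h
  · exact hN.leafInj (hN.eq_of_reflTransGen_forcedStep h).symm
  · exact hN.leafInj (hN.eq_of_reflTransGen_forcedStep h)

lemma IsBinaryNet.forcedWalk_iff (hN : N.IsBinaryNet) {c d : V}
    (hcd : ReflTransGen N.ForcedStep c d) {x : X} : N.ForcedWalk c x ↔ N.ForcedWalk d x := by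
  refine ⟨fun hc => ?_, hcd.trans⟩
  rcases ReflTransGen.total_of_right_unique hN.forcedStep_rightUnique hc hcd with h | h
  · rw [ForcedWalk, hN.eq_of_reflTransGen_forcedStep h]
  · exact h

lemma IsBinaryNet.exists_forcedStep_of_isRet (hN : N.IsBinaryNet) (htc : N.TreeChild)
    {v b : V} (hvb : N.E v b) (hb : N.IsRet b) : ∃ a, N.E v a ∧ a ≠ b ∧ N.ForcedStep v a := by
  obtain ⟨a, ha, hab⟩ :=
    hN.exists_edge_ne (not_isLeaf_of_edge hvb) (hN.not_isRet_of_edge_isRet htc hvb hb) b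
  exact ⟨a, ha, hab, ha,
    .inr ⟨fun har => hab (hN.eq_of_edge_of_isRet_of_isRet htc ha hvb har hb), b, hvb, hb⟩⟩

lemma IsBinaryNet.cherryAt_iff (hN : N.IsBinaryNet) {v a b : V} (hr : ¬ N.IsRet v)
    (ha : N.E v a) (hb : N.E v b) (hab : a ≠ b) {p : Sym2 X} :
    N.CherryAt v p ↔ ∃ x y, N.ForcedWalk a x ∧ N.ForcedWalk b y ∧ x ≠ y ∧ p = s(x, y) := by
  refine ⟨?_, fun ⟨x, y, hx, hy, hxy, hp⟩ => ⟨a, b, x, y, ha, hb, hx, hy, hxy, hp⟩⟩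
  rintro ⟨a', b', x, y, ha', hb', hx, hy, hxy, rfl⟩
  have hl := not_isLeaf_of_edge ha
  rcases hN.eq_or_eq_of_edge hl hr ha hb hab ha' with rfl | rfl <;>
    rcases hN.eq_or_eq_of_edge hl hr ha hb hab hb' with rfl | rfl
  · exact absurd (hN.forcedWalk_unique hx hy) hxy
  · exact ⟨x, y, hx, hy, hxy, rfl⟩
  · exact ⟨y, x, hy, hx, hxy.symm, Sym2.eq_swap⟩
  · exact absurd (hN.forcedWalk_unique hx hy) hxy

lemma CherryAt.not_isRet (hN : N.IsBinaryNet) {v : V} {p : Sym2 X} (h : N.CherryAt v p) :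
    ¬ N.IsRet v := fun hv => by
  obtain ⟨a, b, x, y, ha, hb, hx, hy, hxy, -⟩ := h
  exact hxy (hN.forcedWalk_unique hx (hN.eq_of_edge_of_isRet hv hb ha ▸ hy))

lemma CherryAt.unique (hN : N.IsBinaryNet) {v : V} {p q : Sym2 X} (hp : N.CherryAt v p)
    (hq : N.CherryAt v q) : p = q := by
  have hr := hp.not_isRet hN
  obtain ⟨a, b, x, y, ha, hb, hx, hy, hxy, rfl⟩ := hp
  have hab : a ≠ b := by
    rintro rfl
    exact hxy (hN.forcedWalk_unique hx hy)
  obtain ⟨x', y', hx', hy', -, rfl⟩ := (hN.cherryAt_iff hr ha hb hab).1 hq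
  rw [hN.forcedWalk_unique hx hx', hN.forcedWalk_unique hy hy']

lemma IsBinaryNet.cherryAt_eq_of_forcedWalk_iff (hN : N.IsBinaryNet) (htc : N.TreeChild)
    {v₁ v₂ b : V} (h₁ : N.E v₁ b) (h₂ : N.E v₂ b) (hb : N.IsRet b)
    (hfw : ∀ x, N.ForcedWalk v₁ x ↔ N.ForcedWalk v₂ x) : N.CherryAt v₁ = N.CherryAt v₂ := by
  obtain ⟨a₁, ha₁, hab₁, hs₁⟩ := hN.exists_forcedStep_of_isRet htc h₁ hb
  obtain ⟨a₂, ha₂, hab₂, hs₂⟩ := hN.exists_forcedStep_of_isRet htc h₂ hb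
  have hfw₁ := fun x => hN.forcedWalk_iff (.single hs₁) (x := x)
  have hfw₂ := fun x => hN.forcedWalk_iff (.single hs₂) (x := x)
  funext p
  rw [hN.cherryAt_iff (hN.not_isRet_of_edge_isRet htc h₁ hb) ha₁ h₁ hab₁,
    hN.cherryAt_iff (hN.not_isRet_of_edge_isRet htc h₂ hb) ha₂ h₂ hab₂]
  simp only [← hfw₁, ← hfw₂, hfw]

end Finite

end Net

structure DisplayEmbedding {VT V X : Type} (T : Net VT X) (N : Net V X) (S : V → V → Prop)
    (φ : VT → V) : Prop where
  sub : ∀ u v, S u v → N.E u v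
  inj : Function.Injective φ
  map_leaf : ∀ x, φ (T.leaf x) = N.leaf x
  path : ∀ a b, T.E a b → pathAvoid S (Set.range φ) (φ a) (φ b)
  deg : ∀ a : VT, {w | S (φ a) w}.ncard = T.outDeg a ∧ {u | S u (φ a)}.ncard = T.inDeg a
  deg_off : ∀ v : V, v ∉ Set.range φ → ((∃ u, S u v) ∨ (∃ w, S v w)) →
    {w | S v w}.ncard = 1 ∧ {u | S u v}.ncard = 1

namespace DisplayEmbedding

open Net

variable {VT V X : Type} {T : Net VT X} {N : Net V X} {S : V → V → Prop} {φ : VT → V}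

lemma _root_.Display.exists_displayEmbedding (h : Display T N) :
    ∃ S φ, DisplayEmbedding T N S φ := by
  obtain ⟨S, φ, h₁, h₂, h₃, h₄, h₅, h₆⟩ := h
  exact ⟨S, φ, h₁, h₂, h₃, h₄, h₅, h₆⟩

lemma reflTransGen_map (hS : DisplayEmbedding T N S φ) {a b : VT}
    (h : ReflTransGen T.E a b) : ReflTransGen N.E (φ a) (φ b) := by
  induction h with
  | refl => exact .refl
  | tail _ hbc ih =>
    exact ih.trans (ReflTransGen.mono (fun u v h => hS.sub u v h.1) _ _ (hS.path _ _ hbc))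

lemma exists_sub_parent [Finite VT] (hS : DisplayEmbedding T N S φ) (hT : T.IsPhylo) {u : V}
    (hu : u ≠ φ T.root) (h : u ∈ Set.range φ ∨ ∃ w, S u w) : ∃ q, S q u := by
  by_cases hφ : u ∈ Set.range φ
  · obtain ⟨t, rfl⟩ := hφ
    have ht : t ≠ T.root := by
      rintro rfl
      exact hu rfl
    exact Set.nonempty_of_ncard_ne_zero ((hS.deg t).2 ▸ hT.inDeg_ne_zero ht)
  · have := (hS.deg_off u hφ (.inr (h.resolve_left hφ))).2
    exact Set.nonempty_of_ncard_ne_zero (s := {q | S q u}) (by omega)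

variable [Finite V] [Finite VT]

/-- A leaf, or a vertex with an `S`-child, has an `S`-parent; as a non-reticulation has only one
parent and, by tree-child, a non-reticulate child, induction from the leaves up shows that every
edge into a non-reticulation below `φ T.root` is kept. -/
lemma sub_of_edge_of_not_isRet (hS : DisplayEmbedding T N S φ) (hN : N.IsBinaryNet)
    (htc : N.TreeChild) (hT : T.IsPhylo) {u : V} (hu : TransGen N.E (φ T.root) u)
    (hur : ¬ N.IsRet u) {q : V} (hqu : N.E q u) : S q u := by
  induction u using hN.acyclic.wellFounded_flip.induction generalizing q with
  | _ u ih =>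
  have hne : u ≠ φ T.root := by
    rintro rfl
    exact hN.acyclic _ hu
  have hkept : u ∈ Set.range φ ∨ ∃ w, S u w := by
    by_cases hl : N.IsLeaf u
    · obtain ⟨z, rfl⟩ := hN.leafSurj u hl
      exact .inl ⟨T.leaf z, hS.map_leaf z⟩
    · obtain ⟨w, huw, hwr⟩ := htc.exists_child_not_isRet hl
      exact .inr ⟨w, ih w (.single huw) (hu.tail huw) hwr huw⟩
  obtain ⟨q', hq'⟩ := hS.exists_sub_parent hT hne hkept
  exact eq_of_edge_of_not_isRet hur (hS.sub _ _ hq') hqu ▸ hq'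

lemma forcedStep_of_sub (hS : DisplayEmbedding T N S φ) (hN : N.IsBinaryNet)
    (htc : N.TreeChild) (hT : T.IsPhylo) {u c : V} (hu : u ∉ Set.range φ)
    (hroot : ReflTransGen N.E (φ T.root) u) (huc : S u c) : N.ForcedStep u c := by
  have hE := hS.sub _ _ huc
  refine ⟨hE, or_iff_not_imp_left.2 fun hur => ?_⟩
  obtain ⟨e, hue, hec⟩ := hN.exists_edge_ne (not_isLeaf_of_edge hE) hur c
  have her : N.IsRet e := by
    by_contra her
    have hSue := hS.sub_of_edge_of_not_isRet hN htc hT (.tail' hroot hue) her hue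
    have hS1 := (hS.deg_off u hu (.inr ⟨c, huc⟩)).1
    exact hec ((Set.ncard_le_one_iff (s := {w | S u w}) (Set.toFinite _)).1 hS1.le hSue huc)
  exact ⟨fun hcr => hec (hN.eq_of_edge_of_isRet_of_isRet htc hue hE her hcr), e, hue, her⟩

lemma forcedWalk_of_pathAvoid (hS : DisplayEmbedding T N S φ) (hN : N.IsBinaryNet)
    (htc : N.TreeChild) (hT : T.IsPhylo) {c : V} {z : X}
    (hpath : pathAvoid S (Set.range φ) c (N.leaf z)) (hc : c = N.leaf z ∨ c ∉ Set.range φ)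
    (hroot : ReflTransGen N.E (φ T.root) c) : N.ForcedWalk c z := by
  induction hpath using ReflTransGen.head_induction_on with
  | refl => exact .refl
  | head hstep _ ih =>
    obtain ⟨hS', hc'⟩ := hstep
    rcases hc with rfl | hc
    · exact absurd (hN.leafIsLeaf z) (not_isLeaf_of_edge (hS.sub _ _ hS'))
    · exact .head (hS.forcedStep_of_sub hN htc hT hc hroot hS')
        (ih hc' (hroot.tail (hS.sub _ _ hS')))

lemma exists_forcedWalk_child (hS : DisplayEmbedding T N S φ) (hN : N.IsBinaryNet)
    (htc : N.TreeChild) (hT : T.IsPhylo) {p : VT} {z : X} (hpz : T.E p (T.leaf z)) :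
    ∃ a, N.E (φ p) a ∧ N.ForcedWalk a z := by
  have hpath := hS.path _ _ hpz
  rw [pathAvoid, hS.map_leaf] at hpath
  rcases hpath.cases_head with heq | ⟨a, ⟨hpa, ha⟩, hrest⟩
  · have hp := hS.inj (heq.trans (hS.map_leaf z).symm)
    subst hp
    exact absurd (hT.leafIsLeaf z) (not_isLeaf_of_edge hpz)
  · exact ⟨a, hS.sub _ _ hpa, hS.forcedWalk_of_pathAvoid hN htc hT hrest ha
      ((hS.reflTransGen_map (hT.reach p)).tail (hS.sub _ _ hpa))⟩

end DisplayEmbedding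

namespace Net

variable {V X : Type} {N : Net V X}

lemma IsBinaryNet.exists_cherryAt_of_displaysCherry [Finite V] (hN : N.IsBinaryNet)
    (htc : N.TreeChild) {x y : X} (h : DisplaysCherry N x y) : ∃ v, N.CherryAt v s(x, y) := by
  obtain ⟨VT, T, hfin, hT, hdisp, hxy, p, hpx, hpy⟩ := h
  obtain ⟨S, φ, hS⟩ := hdisp.exists_displayEmbedding
  obtain ⟨a, ha, hax⟩ := hS.exists_forcedWalk_child hN htc hT.1.toIsPhylo hpx
  obtain ⟨b, hb, hby⟩ := hS.exists_forcedWalk_child hN htc hT.1.toIsPhylo hpy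
  exact ⟨φ p, a, b, x, y, ha, hb, hax, hby, hxy, rfl⟩

open scoped Classical in
/-- Vertex-wise form of `#internalTreeVertices + 1 = n + #reticulations`: summing it, the
degree terms cancel. -/
lemma IsBinaryNet.inDeg_add_ite_eq [Finite V] (hN : N.IsBinaryNet) (v : V) :
    N.inDeg v + (if v = N.root then 1 else 0) + (if ¬ N.IsLeaf v ∧ ¬ N.IsRet v then 1 else 0)
      = N.outDeg v + (if N.IsLeaf v then 1 else 0) + (if N.IsRet v then 1 else 0) := by
  by_cases hl : N.IsLeaf v
  · obtain ⟨x, rfl⟩ := hN.leafSurj _ hl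
    have hroot : N.leaf x ≠ N.root := fun h => hN.root_not_isLeaf (h ▸ hl)
    simp [hl, hroot, hN.not_isRet_of_isLeaf hl, hN.leafIn x, show N.outDeg _ = 0 from hl]
  by_cases hr : N.IsRet v
  · have hroot : v ≠ N.root := fun h => hN.root_not_isRet (h ▸ hr)
    simp [hl, hr, hroot, hN.degrees_of_isRet hr]
  rw [hN.outDeg_eq_two hl hr]
  by_cases hroot : v = N.root
  · subst hroot
    simp [hl, hr, hN.rootIn]
  · simp [hl, hr, hroot, hN.inDeg_eq_one hroot hr]

section Counting

open scoped Classical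

variable [Fintype V]

noncomputable def internalTreeVertices (N : Net V X) : Finset V :=
  {v | ¬ N.IsLeaf v ∧ ¬ N.IsRet v}

noncomputable def reticulations (N : Net V X) : Finset V := {v | N.IsRet v}

noncomputable def retParents (N : Net V X) : Finset V := {v | ∃ b, N.E v b ∧ N.IsRet b}

lemma outDeg_eq_card (N : Net V X) (v : V) : N.outDeg v = #{w | N.E v w} := by
  rw [outDeg, Set.ncard_eq_toFinset_card', Set.toFinset_ofPred]

lemma inDeg_eq_card (N : Net V X) (v : V) : N.inDeg v = #{u | N.E u v} := by
  rw [inDeg, Set.ncard_eq_toFinset_card', Set.toFinset_ofPred]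

lemma sum_inDeg_eq_sum_outDeg (N : Net V X) : ∑ v, N.inDeg v = ∑ v, N.outDeg v := by
  simp only [inDeg_eq_card, outDeg_eq_card]
  exact (sum_card_bipartiteAbove_eq_sum_card_bipartiteBelow _).symm

lemma IsPhylo.card_leaves [Fintype X] (hN : N.IsPhylo) : #{v | N.IsLeaf v} = Fintype.card X := by
  have : ({v | N.IsLeaf v} : Finset V) = univ.image N.leaf := by
    ext v
    simp only [mem_filter, mem_univ, true_and, mem_image]
    exact ⟨hN.leafSurj v, fun ⟨x, hx⟩ => hx ▸ hN.leafIsLeaf x⟩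
  rw [this, card_image_of_injective _ hN.leafInj, card_univ]

lemma IsBinaryNet.card_internalTreeVertices_add_one [Fintype X] (hN : N.IsBinaryNet) :
    #N.internalTreeVertices + 1 = Fintype.card X + #N.reticulations := by
  have h := sum_congr rfl fun v (_ : v ∈ univ) => hN.inDeg_add_ite_eq v
  have hroot : #({v | v = N.root} : Finset V) = 1 := card_eq_one.2 ⟨N.root, by ext; simp⟩
  simp only [sum_add_distrib, sum_boole, Nat.cast_id, hroot, N.sum_inDeg_eq_sum_outDeg,
    hN.card_leaves] at h
  unfold internalTreeVertices reticulations
  omega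

lemma IsBinaryNet.card_retParents (hN : N.IsBinaryNet) (htc : N.TreeChild) :
    #N.retParents = 2 * #N.reticulations := by
  rw [mul_comm, ← mul_one #N.retParents]
  refine card_mul_eq_card_mul N.E (fun v hv => ?_) (fun b hb => ?_)
  · obtain ⟨b, hvb, hb⟩ := (mem_filter.1 hv).2
    refine card_eq_one.2 ⟨b, ?_⟩
    ext b'
    simp only [bipartiteAbove, reticulations, mem_filter, mem_univ, true_and, mem_singleton]
    exact ⟨fun ⟨hb', hvb'⟩ => hN.eq_of_edge_of_isRet_of_isRet htc hvb' hvb hb' hb,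
      fun h => h ▸ ⟨hb, hvb⟩⟩
  · have hbr : N.IsRet b := (mem_filter.1 hb).2
    rw [← (hN.degrees_of_isRet hbr).1, inDeg_eq_card]
    congr 1
    ext u
    simp only [bipartiteBelow, retParents, mem_filter, mem_univ, true_and]
    exact ⟨fun h => h.2, fun h => ⟨⟨b, h, hbr⟩, h⟩⟩

lemma CherryAt.mem_internalTreeVertices (hN : N.IsBinaryNet) {v : V} {p : Sym2 X}
    (h : N.CherryAt v p) : v ∈ N.internalTreeVertices := by
  obtain ⟨a, -, -, -, ha, -⟩ := id h
  exact mem_filter.2 ⟨mem_univ v, not_isLeaf_of_edge ha, h.not_isRet hN⟩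

lemma IsBinaryNet.retParents_subset (hN : N.IsBinaryNet) (htc : N.TreeChild) :
    N.retParents ⊆ N.internalTreeVertices := by
  intro v hv
  obtain ⟨b, hvb, hb⟩ := (mem_filter.1 hv).2
  exact mem_filter.2 ⟨mem_univ v, not_isLeaf_of_edge hvb, hN.not_isRet_of_edge_isRet htc hvb hb⟩

lemma IsBinaryNet.exists_ne_cherryAt_eq (hN : N.IsBinaryNet) (htc : N.TreeChild)
    (hall : N.internalTreeVertices ⊆ N.retParents) :
    ∃ v₁ ∈ N.internalTreeVertices, ∃ v₂ ∈ N.internalTreeVertices,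
      v₁ ≠ v₂ ∧ N.CherryAt v₁ = N.CherryAt v₂ := by
  have hretChild : ∀ u, ¬ N.IsLeaf u → ¬ N.IsRet u → ∃ e, N.E u e ∧ N.IsRet e := fun u hl hr =>
    (mem_filter.1 (hall (mem_filter.2 ⟨mem_univ u, hl, hr⟩))).2
  obtain ⟨b₀, -, hb₀⟩ := hretChild N.root hN.root_not_isLeaf hN.root_not_isRet
  obtain ⟨b, hb, hmin⟩ := hN.acyclic.wellFounded.has_min {b | N.IsRet b} ⟨b₀, hb₀⟩
  have hA : ∀ u, TransGen N.E u b → ¬ N.IsRet u ∧ ∃ e, N.E u e ∧ N.IsRet e := fun u hu =>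
    have hr : ¬ N.IsRet u := fun hr => hmin u hr hu
    have ⟨_, hc, _⟩ := TransGen.head'_iff.1 hu
    ⟨hr, hretChild u (not_isLeaf_of_edge hc) hr⟩
  obtain ⟨p₁, hp₁, p₂, hp₂, hne⟩ := (Set.one_lt_ncard (Set.toFinite _)).1
    (show 1 < N.inDeg b by rw [(hN.degrees_of_isRet hb).1]; omega)
  have hfw : ∀ x, N.ForcedWalk p₁ x ↔ N.ForcedWalk p₂ x := by
    rcases ReflTransGen.total_of_right_unique hN.forcedStep_rightUnique
      (reflTransGen_forcedStep_of_forall_transGen hA (hN.reach p₁) (.single hp₁))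
      (reflTransGen_forcedStep_of_forall_transGen hA (hN.reach p₂) (.single hp₂)) with h | h
    · exact fun x => hN.forcedWalk_iff h
    · exact fun x => (hN.forcedWalk_iff h).symm
  have hmem : ∀ {p}, N.E p b → p ∈ N.internalTreeVertices := fun hp =>
    hN.retParents_subset htc (mem_filter.2 ⟨mem_univ _, b, hp, hb⟩)
  exact ⟨p₁, hmem hp₁, p₂, hmem hp₂, hne, hN.cherryAt_eq_of_forcedWalk_iff htc hp₁ hp₂ hb hfw⟩

theorem IsBinaryNet.ncard_displaysCherry_le [Fintype X] (hN : N.IsBinaryNet)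
    (htc : N.TreeChild) :
    {p : Sym2 X | ∃ x y, p = s(x, y) ∧ DisplaysCherry N x y}.ncard
      ≤ 2 * Fintype.card X - 3 := by
  have hsub : {p : Sym2 X | ∃ x y, p = s(x, y) ∧ DisplaysCherry N x y}
      ⊆ {p | ∃ v ∈ N.internalTreeVertices, N.CherryAt v p} := by
    rintro _ ⟨x, y, rfl, h⟩
    obtain ⟨v, hv⟩ := hN.exists_cherryAt_of_displaysCherry htc h
    exact ⟨v, hv.mem_internalTreeVertices hN, hv⟩
  refine (Set.ncard_le_ncard hsub (Set.toFinite _)).trans ?_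
  have hunique : Relator.RightUnique N.CherryAt := fun _ _ _ => CherryAt.unique hN
  have hcount := hN.card_internalTreeVertices_add_one
  have hret := hN.card_retParents htc
  have hle := card_le_card (hN.retParents_subset htc)
  by_cases hall : N.internalTreeVertices ⊆ N.retParents
  · obtain ⟨v₁, h₁, v₂, h₂, hne, heq⟩ := hN.exists_ne_cherryAt_eq htc hall
    have := card_le_card hall
    exact (ncard_setOf_exists_le_card_sub_one hunique h₁ h₂ hne heq).trans (by omega)
  · have := card_lt_card ((hN.retParents_subset htc).ssubset_of_not_subset hall)
    exact (ncard_setOf_exists_le_card hunique _).trans (by omega)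

end Counting

end Net

theorem stmt_10_general {V X : Type} [Fintype V] [Fintype X] (N : Net V X)
    (hN : N.IsBinaryNet) (htc : N.TreeChild) :
    {p : Sym2 X | ∃ x y, p = s(x, y) ∧ DisplaysCherry N x y}.ncard
      ≤ 2 * Fintype.card X - 3 ∧
    ∀ (ι : Type) (VT : ι → Type) (Ts : ∀ i, Net (VT i) X),
      (∀ i, Finite (VT i)) → (∀ i, (Ts i).IsBinaryTree) → (∀ i, Display (Ts i) N) →
      {p : Sym2 X | ∃ i, p ∈ Net.cherries (Ts i)}.ncard ≤ 2 * Fintype.card X - 3 := by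
  refine ⟨hN.ncard_displaysCherry_le htc, fun ι VT Ts hfin hbt hdisp => ?_⟩
  refine (Set.ncard_le_ncard ?_ (Set.toFinite _)).trans (hN.ncard_displaysCherry_le htc)
  rintro _ ⟨i, x, y, rfl, hxy⟩
  exact ⟨x, y, rfl, VT i, Ts i, hfin i, hbt i, hdisp i, hxy⟩

/-- A binary tree-child network on `n` taxa displays at most `2n - 3` distinct cherries;
consequently, any set of binary trees co-displayed in it has at most `2n - 3` distinct
cherries. -/
theorem stmt_10 {V X : Type} [Fintype V] [Fintype X] (N : Net V X)
    (hN : N.IsBinaryNet) (htc : N.TreeChild) (hn : 2 ≤ Fintype.card X) :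
    {p : Sym2 X | ∃ x y, p = s(x, y) ∧ DisplaysCherry N x y}.ncard
      ≤ 2 * Fintype.card X - 3 ∧
    ∀ (ι : Type) (VT : ι → Type) (Ts : ∀ i, Net (VT i) X),
      (∀ i, Finite (VT i)) → (∀ i, (Ts i).IsBinaryTree) → (∀ i, Display (Ts i) N) →
      {p : Sym2 X | ∃ i, p ∈ Net.cherries (Ts i)}.ncard ≤ 2 * Fintype.card X - 3 :=
  stmt_10_general N hN htc
end

section
/- For every odd n ≥ 5, there exist four binary phylogenetic trees on n taxa that cannot be simultaneously displayed in any binary tree-child network on those taxa; in particular, one can construct four trees whose union contains 2n−2 > 2n−3 distinct cherries. -/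
set_option linter.unusedSectionVars false

open Relation Set

section Aux
variable {V : Type} [Finite V]

lemma ncard_ne_zero_of_mem' {s : Set V} {a : V} (h : a ∈ s) : s.ncard ≠ 0 := by
  have := Set.ncard_pos (s := s) (Set.toFinite s)
  simp only [Set.nonempty_iff_ne_empty] at this
  have hne : s ≠ ∅ := by intro hs; rw [hs] at h; exact h
  have := this.2 hne
  omega

lemma two_le_ncard' {s : Set V} {a b : V} (ha : a ∈ s) (hb : b ∈ s) (hab : a ≠ b) :
    2 ≤ s.ncard := by
  have := Set.one_lt_ncard_iff (s := s) (Set.toFinite s)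
  exact this.2 ⟨a, b, ha, hb, hab⟩

lemma eq_of_ncard_le_one {s : Set V} (h : s.ncard ≤ 1) {a b : V} (ha : a ∈ s) (hb : b ∈ s) :
    a = b := by
  by_contra hab
  have := two_le_ncard' ha hb hab
  omega

lemma pair_of_ncard_two {s : Set V} (h : s.ncard = 2) {a b : V} (ha : a ∈ s) (hb : b ∈ s)
    (hab : a ≠ b) : s = {a, b} := by
  obtain ⟨c, d, hcd, rfl⟩ := Set.ncard_eq_two.1 h
  rcases ha with ha | ha <;> rcases hb with hb | hb <;> simp_all
  · exact (Set.pair_comm c d)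

lemma mem_pair_resolve {s : Set V} (h : s.ncard = 2) {a b c d : V} (ha : a ∈ s) (hb : b ∈ s)
    (hab : a ≠ b) (hc : c ∈ s) (hd : d ∈ s) (hcd : c ≠ d) :
    (c = a ∧ d = b) ∨ (c = b ∧ d = a) := by
  have hs := pair_of_ncard_two h ha hb hab
  rw [hs] at hc hd
  rcases hc with rfl | rfl <;> rcases hd with rfl | rfl <;> simp_all

end Aux

section ChainDefs

open Relation

variable {V X : Type}

/-- Tree edge variant recording only indegree of target. -/
def TEdge (N : Net V X) (u v : V) : Prop := N.E u v ∧ N.inDeg v ≤ 1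

/-- A valid descending chain of tree nodes from `c` to the leaf labelled `x`,
where every intermediate node's off-chain child is a reticulation. -/
inductive TChain (N : Net V X) : V → X → Prop
  | leaf (x : X) : TChain N (N.leaf x) x
  | step {c d w : V} {x : X} : N.E c d → N.E c w → d ≠ w → N.inDeg d ≤ 1 →
      2 ≤ N.inDeg w → TChain N d x → TChain N c x

/-- A valid chain, possibly starting with a single reticulation. -/
def Chain (N : Net V X) (c : V) (x : X) : Prop :=
  TChain N c x ∨ (2 ≤ N.inDeg c ∧ ∃ d, N.E c d ∧ TChain N d x)

/-- `v` hosts the cherry `{x,y}`. -/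
def Host (N : Net V X) (v : V) (x y : X) : Prop :=
  ∃ c₁ c₂, N.E v c₁ ∧ N.E v c₂ ∧ c₁ ≠ c₂ ∧ Chain N c₁ x ∧ Chain N c₂ y

end ChainDefs

section ChainLemmas

open Relation

variable {V X : Type} [Finite V] {N : Net V X}

lemma not_isLeaf_of_edge (h : N.E u v) : ¬ N.IsLeaf u :=
  ncard_ne_zero_of_mem' (s := {w | N.E u w}) h

lemma one_le_inDeg_of_edge (h : N.E u v) : 1 ≤ N.inDeg v := by
  have := ncard_ne_zero_of_mem' (s := {w | N.E w v}) h
  unfold Net.inDeg; omega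

lemma outDeg_two (hB : N.IsBinaryNet) {v a b : V} (ha : N.E v a) (hb : N.E v b)
    (hab : a ≠ b) : N.inDeg v ≤ 1 ∧ N.outDeg v = 2 := by
  rcases hB.deg v (not_isLeaf_of_edge ha) with h | h
  · exact h
  · exfalso
    have h2 : (2:ℕ) ≤ N.outDeg v := two_le_ncard' (s := {w | N.E v w}) ha hb hab
    omega

lemma unique_child_of_outDeg_one (h : N.outDeg v = 1) {a b : V} (ha : N.E v a)
    (hb : N.E v b) : a = b :=
  eq_of_ncard_le_one (s := {w | N.E v w}) (le_of_eq h) ha hb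

lemma unique_parent (h : N.inDeg v ≤ 1) {a b : V} (ha : N.E a v) (hb : N.E b v) : a = b :=
  eq_of_ncard_le_one (s := {w | N.E w v}) h ha hb

lemma children_resolve (hB : N.IsBinaryNet) {v a b c d : V} (ha : N.E v a) (hb : N.E v b)
    (hab : a ≠ b) (hc : N.E v c) (hd : N.E v d) (hcd : c ≠ d) :
    (c = a ∧ d = b) ∨ (c = b ∧ d = a) :=
  mem_pair_resolve (s := {w | N.E v w}) (outDeg_two hB ha hb hab).2 ha hb hab hc hd hcd

lemma other_child (hB : N.IsBinaryNet) {v a : V} (h2 : N.outDeg v = 2) (ha : N.E v a) :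
    ∃ b, N.E v b ∧ b ≠ a := by
  obtain ⟨c, d, hcd, hs⟩ := Set.ncard_eq_two.1 (h2 : ({w | N.E v w}).ncard = 2)
  have hc : N.E v c := by have : c ∈ {w | N.E v w} := by rw [hs]; simp
                          exact this
  have hd : N.E v d := by have : d ∈ {w | N.E v w} := by rw [hs]; simp
                          exact this
  rcases eq_or_ne a c with rfl | hac
  · exact ⟨d, hd, fun h => hcd h.symm⟩
  · have : a ∈ ({c,d} : Set V) := hs ▸ ha
    rcases this with rfl | rfl
    · exact absurd rfl hac
    · exact ⟨c, hc, fun h => hcd h⟩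

lemma leaf_not_ret (hB : N.IsBinaryNet) (x : X) : ¬ (2 ≤ N.inDeg (N.leaf x)) := by
  have := hB.leafIn x; omega

/-- A vertex starting a `TChain` is not a reticulation. -/
lemma TChain_not_ret (hB : N.IsBinaryNet) (h : TChain N c x) : N.inDeg c ≤ 1 := by
  cases h with
  | leaf x => have := hB.leafIn x; omega
  | step hd hw hdw hdt hwr hch =>
      by_contra hcr
      push_neg at hcr
      rcases hB.deg _ (not_isLeaf_of_edge hd) with h | h
      · omega
      · exact hdw (unique_child_of_outDeg_one h.2 hd hw)

lemma TChain_leaf_inv (hch : TChain N c y) (hc : N.IsLeaf c) : c = N.leaf y := by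
  cases hch with
  | leaf => rfl
  | step hd hw hdw hdt hwr h => exact absurd hc (not_isLeaf_of_edge hd)

lemma TChain_unique (hB : N.IsBinaryNet) (h1 : TChain N c x) :
    ∀ y, TChain N c y → x = y := by
  induction h1 with
  | leaf x =>
      intro y h2
      exact hB.leafInj (TChain_leaf_inv h2 (hB.leafIsLeaf x))
  | step hd hw hdw hdt hwr hch ih =>
      intro y h2
      cases h2 with
      | leaf => exact absurd (hB.leafIsLeaf _) (not_isLeaf_of_edge hd)
      | step hd' hw' hdw' hdt' hwr' hch' =>
          rcases children_resolve hB hd hw hdw hd' hw' hdw' with ⟨h1, h2⟩ | ⟨h1, h2⟩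
          · exact ih y (h1 ▸ hch')
          · subst h1; omega
end ChainLemmas

section MoreChain
set_option linter.unusedVariables false

open Relation

variable {V X : Type} [Finite V] {N : Net V X}

lemma Chain_unique (hB : N.IsBinaryNet) {c : V} {x y : X} (h1 : Chain N c x)
    (h2 : Chain N c y) : x = y := by
  rcases h1 with h1 | ⟨hr, d, hd, h1⟩
  · rcases h2 with h2 | ⟨hr, d', hd', h2⟩
    · exact TChain_unique hB h1 y h2
    · exact absurd hr (by have := TChain_not_ret hB h1; omega)
  · rcases h2 with h2 | ⟨hr', d', hd', h2⟩
    · exact absurd hr (by have := TChain_not_ret hB h2; omega)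
    · have hnl : ¬ N.IsLeaf c := not_isLeaf_of_edge hd
      rcases hB.deg c hnl with h | h
      · omega
      · have := unique_child_of_outDeg_one h.2 hd hd'
        exact TChain_unique hB h1 y (this ▸ h2)

lemma Host_unique (hB : N.IsBinaryNet) {v : V} {x y x' y' : X} (h1 : Host N v x y)
    (h2 : Host N v x' y') : s(x, y) = s(x', y') := by
  obtain ⟨c₁, c₂, hc₁, hc₂, hne, hx, hy⟩ := h1
  obtain ⟨d₁, d₂, hd₁, hd₂, hne', hx', hy'⟩ := h2
  rcases children_resolve hB hc₁ hc₂ hne hd₁ hd₂ hne' with ⟨e1, e2⟩ | ⟨e1, e2⟩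
  · have := Chain_unique hB hx (e1 ▸ hx')
    have := Chain_unique hB hy (e2 ▸ hy')
    rw [Sym2.eq_iff]; tauto
  · have := Chain_unique hB hy (e1 ▸ hx')
    have := Chain_unique hB hx (e2 ▸ hy')
    rw [Sym2.eq_iff]; tauto

lemma Host_treeNode (hB : N.IsBinaryNet) {v : V} {x y : X} (h : Host N v x y) :
    N.outDeg v ≠ 0 ∧ N.inDeg v ≤ 1 := by
  obtain ⟨c₁, c₂, hc₁, hc₂, hne, hx, hy⟩ := h
  exact ⟨not_isLeaf_of_edge hc₁, (outDeg_two hB hc₁ hc₂ hne).1⟩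

lemma TChain_TE_path (h : TChain N c x) :
    Relation.ReflTransGen (TEdge N) c (N.leaf x) := by
  induction h with
  | leaf x => exact .refl
  | step hd hw hdw hdt hwr hch ih => exact .head ⟨hd, hdt⟩ ih

/-- Well-foundedness of ancestry. -/
lemma wf_up (hA : N.Acyclic) : WellFounded (fun a b : V => Relation.TransGen N.E a b) := by
  have h1 : IsTrans V (fun a b : V => Relation.TransGen N.E a b) := ⟨fun a b c h1 h2 => h1.trans h2⟩
  have h2 : IsIrrefl V (fun a b : V => Relation.TransGen N.E a b) := ⟨hA⟩
  exact Finite.wellFounded_of_trans_of_irrefl _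

lemma wf_down (hA : N.Acyclic) : WellFounded (fun a b : V => Relation.TransGen N.E b a) := by
  have h1 : IsTrans V (fun a b : V => Relation.TransGen N.E b a) :=
    ⟨fun a b c h1 h2 => h2.trans h1⟩
  have h2 : IsIrrefl V (fun a b : V => Relation.TransGen N.E b a) := ⟨hA⟩
  exact Finite.wellFounded_of_trans_of_irrefl _

/-- Every vertex other than the root has an incoming edge. -/
lemma exists_parent (hB : N.IsBinaryNet) {v : V} (hv : v ≠ N.root) : ∃ u, N.E u v := by
  have := hB.reach v
  rcases (Relation.ReflTransGen.cases_tail this) with h | ⟨c, hc, hcv⟩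
  · exact absurd h hv
  · exact ⟨c, hcv⟩

lemma root_or_parent (hB : N.IsBinaryNet) (v : V) :
    v = N.root ∨ 1 ≤ N.inDeg v := by
  rcases eq_or_ne v N.root with rfl | hv
  · exact Or.inl rfl
  · obtain ⟨u, hu⟩ := exists_parent hB hv
    exact Or.inr (one_le_inDeg_of_edge hu)

/-- Climbing to the root of the tree component. -/
lemma climb_exists (hB : N.IsBinaryNet) (v : V) :
    ∃ ρ, (ρ = N.root ∨ 2 ≤ N.inDeg ρ) ∧ Relation.ReflTransGen (TEdge N) ρ v := by
  induction v using (wf_up hB.acyclic).induction with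
  | _ v ih =>
    rcases eq_or_ne v N.root with rfl | hv
    · exact ⟨N.root, Or.inl rfl, .refl⟩
    rcases le_or_gt 2 (N.inDeg v) with hr | hr
    · exact ⟨v, Or.inr hr, .refl⟩
    obtain ⟨u, hu⟩ := exists_parent hB hv
    obtain ⟨ρ, hρ, hpath⟩ := ih u (Relation.TransGen.single hu)
    exact ⟨ρ, hρ, hpath.tail ⟨hu, by omega⟩⟩

lemma climb_unique (hB : N.IsBinaryNet) : ∀ (v ρ₁ ρ₂ : V),
    (ρ₁ = N.root ∨ 2 ≤ N.inDeg ρ₁) → (ρ₂ = N.root ∨ 2 ≤ N.inDeg ρ₂) →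
    Relation.ReflTransGen (TEdge N) ρ₁ v → Relation.ReflTransGen (TEdge N) ρ₂ v →
    ρ₁ = ρ₂ := by
  intro v
  induction v using (wf_up hB.acyclic).induction with
  | _ v ih =>
    intro ρ₁ ρ₂ h₁ h₂ p₁ p₂
    by_cases hv : v = N.root ∨ 2 ≤ N.inDeg v
    · -- both paths must be trivial
      have triv : ∀ ρ, (ρ = N.root ∨ 2 ≤ N.inDeg ρ) →
          Relation.ReflTransGen (TEdge N) ρ v → ρ = v := by
        intro ρ hρ hp
        rcases Relation.ReflTransGen.cases_tail hp with h | ⟨c, hc, hcv⟩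
        · exact h.symm
        · exfalso
          have h1 : 1 ≤ N.inDeg v := one_le_inDeg_of_edge hcv.1
          have h2 := hcv.2
          rcases hv with rfl | hv
          · have := hB.rootIn; omega
          · omega
      rw [triv ρ₁ h₁ p₁, triv ρ₂ h₂ p₂]
    · push_neg at hv
      obtain ⟨hvr, hvd⟩ := hv
      have step : ∀ ρ, (ρ = N.root ∨ 2 ≤ N.inDeg ρ) → Relation.ReflTransGen (TEdge N) ρ v →
          ∃ c, Relation.ReflTransGen (TEdge N) ρ c ∧ N.E c v := by
        intro ρ hρ hp
        rcases Relation.ReflTransGen.cases_tail hp with h | ⟨c, hc, hcv⟩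
        · subst h
          rcases hρ with h | h
          · exact absurd h hvr
          · omega
        · exact ⟨c, hc, hcv.1⟩
      obtain ⟨c₁, hc₁, he₁⟩ := step ρ₁ h₁ p₁
      obtain ⟨c₂, hc₂, he₂⟩ := step ρ₂ h₂ p₂
      have : c₁ = c₂ := unique_parent (by omega) he₁ he₂
      subst this
      exact ih c₁ (Relation.TransGen.single he₁) ρ₁ ρ₂ h₁ h₂ hc₁ hc₂

/-- Tree-child descent to a leaf. -/
lemma descend (hB : N.IsBinaryNet) (hTC : N.TreeChild) (v : V) :
    ∃ x, Relation.ReflTransGen (TEdge N) v (N.leaf x) := by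
  induction v using (wf_down hB.acyclic).induction with
  | _ v ih =>
    by_cases hl : N.IsLeaf v
    · obtain ⟨x, hx⟩ := hB.leafSurj v hl
      exact ⟨x, hx ▸ .refl⟩
    · obtain ⟨w, hw, hwt⟩ := hTC v hl
      obtain ⟨x, hx⟩ := ih w (Relation.TransGen.single hw)
      exact ⟨x, .head ⟨hw, hwt⟩ hx⟩

end MoreChain

section Extract
set_option linter.unusedVariables false
set_option maxHeartbeats 800000

open Relation

variable {V X VT : Type} [Finite V] [Finite VT] {N : Net V X} {T : Net VT X}
  {S : V → V → Prop} {φ : VT → V}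

lemma rtg_mono {r s : V → V → Prop} (h : ∀ u v, r u v → s u v) {a b : V}
    (hp : Relation.ReflTransGen r a b) : Relation.ReflTransGen s a b := by
  induction hp with
  | refl => exact .refl
  | tail _ h2 ih => exact ih.tail (h _ _ h2)

section WithDisplay

variable (hB : N.IsBinaryNet) (hTC : N.TreeChild) (hT : T.IsBinaryTree)
  (hS : ∀ u v, S u v → N.E u v) (hφ : Function.Injective φ)
  (hleaf : ∀ x, φ (T.leaf x) = N.leaf x)
  (hdeg : ∀ a : VT, {w | S (φ a) w}.ncard = T.outDeg a ∧ {u | S u (φ a)}.ncard = T.inDeg a)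
  (hsup : ∀ v : V, v ∉ Set.range φ → ((∃ u, S u v) ∨ (∃ w, S v w)) →
      {w | S v w}.ncard = 1 ∧ {u | S u v}.ncard = 1)

include hB hT hS hleaf hdeg hsup

lemma S_in_exists : ∀ v, ((∃ u, S u v) ∨ (∃ w, S v w)) → v ≠ φ T.root → ∃ u, S u v := by
  intro v hcov hne
  by_cases hv : v ∈ Set.range φ
  · obtain ⟨a, rfl⟩ := hv
    have ha : a ≠ T.root := fun h => hne (by rw [h])
    have h1 : 1 ≤ T.inDeg a := by
      obtain ⟨u, hu⟩ := exists_parent hT.1 ha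
      exact one_le_inDeg_of_edge hu
    have h2 := (hdeg a).2
    have : ({u | S u (φ a)}).ncard ≠ 0 := by omega
    obtain ⟨u, hu⟩ := Set.nonempty_of_ncard_ne_zero this
    exact ⟨u, hu⟩
  · have := (hsup v hv hcov).2
    obtain ⟨u, hu⟩ := Set.nonempty_of_ncard_ne_zero (by omega : ({u | S u v}).ncard ≠ 0)
    exact ⟨u, hu⟩

lemma upReach : ∀ v, ((∃ u, S u v) ∨ (∃ w, S v w)) →
    Relation.ReflTransGen S (φ T.root) v := by
  intro v
  induction v using (wf_up hB.acyclic).induction with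
  | _ v ih =>
    intro hcov
    rcases eq_or_ne v (φ T.root) with rfl | hne
    · exact .refl
    obtain ⟨u, hu⟩ := S_in_exists hB hT hS hleaf hdeg hsup v hcov hne
    have : Relation.ReflTransGen S (φ T.root) u :=
      ih u (Relation.TransGen.single (hS _ _ hu)) (Or.inr ⟨v, hu⟩)
    exact this.tail hu

include hTC

lemma leaf_pull : ∀ (w l : V), Relation.ReflTransGen (TEdge N) w l → N.IsLeaf l →
    Relation.TransGen N.E (φ T.root) w → ∃ q, S q w := by
  intro w l hwl hl
  induction hwl using Relation.ReflTransGen.head_induction_on with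
  | refl =>
      intro _
      obtain ⟨z, hz⟩ := hB.leafSurj l hl
      have h2 := (hdeg (T.leaf z)).2
      rw [hleaf z, hz] at h2
      rw [hT.1.leafIn z] at h2
      obtain ⟨q, hq⟩ := Set.nonempty_of_ncard_ne_zero (by rw [h2]; omega : ({u | S u l}).ncard ≠ 0)
      exact ⟨q, hq⟩
  | head h' hrest ih =>
      rename_i w b
      intro hroot
      have hroot' : Relation.TransGen N.E (φ T.root) b := hroot.tail h'.1
      obtain ⟨q, hq⟩ := ih hroot'
      have heq : q = w := unique_parent h'.2 (hS _ _ hq) h'.1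
      rw [heq] at hq
      -- w has an S-out edge, hence is covered
      have hwcov : (∃ u, S u w) ∨ (∃ z, S w z) := Or.inr ⟨b, hq⟩
      have hwne : w ≠ φ T.root := by
        rintro rfl
        exact hB.acyclic _ hroot
      exact S_in_exists hB hT hS hleaf hdeg hsup w hwcov hwne

lemma no_drop {c d w : V} (hcd : S c d) (hout : ({z | S c z}).ncard = 1)
    (hcw : N.E c w) (hwd : w ≠ d) (hwt : N.inDeg w ≤ 1) : False := by
  have hcov : (∃ u, S u c) ∨ (∃ z, S c z) := Or.inr ⟨d, hcd⟩
  have h1 : Relation.ReflTransGen N.E (φ T.root) c :=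
    rtg_mono hS (upReach hB hT hS hleaf hdeg hsup c hcov)
  have hroot : Relation.TransGen N.E (φ T.root) w := Relation.TransGen.tail' h1 hcw
  obtain ⟨x, hx⟩ := descend hB hTC w
  obtain ⟨q, hq⟩ := leaf_pull hB hTC hT hS hleaf hdeg hsup w (N.leaf x) hx (hB.leafIsLeaf x) hroot
  have heq : q = c := unique_parent hwt (hS _ _ hq) hcw
  rw [heq] at hq
  have : (2:ℕ) ≤ ({z | S c z}).ncard := two_le_ncard' hq hcd hwd
  omega

lemma TChainOf {x : X} : ∀ (c : V),
    Relation.ReflTransGen (fun u v => S u v ∧ (v = N.leaf x ∨ v ∉ Set.range φ)) c (N.leaf x) →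
    (c = N.leaf x ∨ c ∉ Set.range φ) → N.inDeg c ≤ 1 → TChain N c x := by
  intro c hp
  induction hp using Relation.ReflTransGen.head_induction_on with
  | refl => intro _ _; exact TChain.leaf x
  | head h' hrest ih =>
      rename_i c b
      intro hc hdegc
      obtain ⟨hScb, hbcond⟩ := h'
      have hEcb : N.E c b := hS _ _ hScb
      have hcnl : ¬ N.IsLeaf c := not_isLeaf_of_edge hEcb
      have hcrange : c ∉ Set.range φ := by
        rcases hc with rfl | hc
        · exact absurd (hB.leafIsLeaf x) hcnl
        · exact hc
      have hout : ({z | S c z}).ncard = 1 :=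
        (hsup c hcrange (Or.inr ⟨b, hScb⟩)).1
      have hcdeg : N.outDeg c = 2 := by
        rcases hB.deg c hcnl with h | h
        · exact h.2
        · omega
      obtain ⟨w, hcw, hwb⟩ := other_child hB hcdeg hEcb
      have hwr : 2 ≤ N.inDeg w := by
        by_contra hh
        exact no_drop hB hTC hT hS hleaf hdeg hsup hScb hout hcw hwb (by omega)
      have hbt : N.inDeg b ≤ 1 := by
        obtain ⟨z, hz, hzt⟩ := hTC c hcnl
        have hzmem : z ∈ {p | N.E c p} := hz
        have hpair : ({p | N.E c p} : Set V) = {b, w} :=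
          pair_of_ncard_two hcdeg hEcb hcw (Ne.symm hwb)
        rw [hpair] at hzmem
        rcases hzmem with rfl | rfl
        · exact hzt
        · exact absurd hwr (by have : N.inDeg z ≤ 1 := hzt; omega)
      exact TChain.step hEcb hcw (Ne.symm hwb) hbt hwr (ih hbcond hbt)

lemma ChainOf {x : X} {c : V}
    (hp : Relation.ReflTransGen (fun u v => S u v ∧ (v = N.leaf x ∨ v ∉ Set.range φ)) c (N.leaf x))
    (hc : c = N.leaf x ∨ c ∉ Set.range φ) : Chain N c x := by
  rcases le_or_gt (N.inDeg c) 1 with hct | hct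
  · exact Or.inl (TChainOf hB hTC hT hS hleaf hdeg hsup c hp hc hct)
  · have hcr : 2 ≤ N.inDeg c := hct
    have hcnleaf : ¬ N.IsLeaf c := by
      intro hl
      obtain ⟨z, hz⟩ := hB.leafSurj c hl
      have := hB.leafIn z
      rw [hz] at this
      omega
    have hcout : N.outDeg c = 1 := by
      rcases hB.deg c hcnleaf with h | h
      · omega
      · exact h.2
    have hcx : c ≠ N.leaf x := by
      rintro rfl
      have := hB.leafIn x
      omega
    rcases Relation.ReflTransGen.cases_head hp with h | ⟨d, ⟨hScd, hdcond⟩, hrest⟩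
    · exact absurd h hcx
    · have hEcd : N.E c d := hS _ _ hScd
      have hdt : N.inDeg d ≤ 1 := by
        obtain ⟨z, hz, hzt⟩ := hTC c hcnleaf
        have := unique_child_of_outDeg_one hcout hz hEcd
        exact this ▸ hzt
      exact Or.inr ⟨hcr, d, hEcd,
        TChainOf hB hTC hT hS hleaf hdeg hsup d hrest hdcond hdt⟩

include hφ

theorem host_of_cherry (hpath : ∀ a b, T.E a b → pathAvoid S (Set.range φ) (φ a) (φ b))
    {x y : X} (hxy : T.HasCherry x y) : ∃ v, Host N v x y := by
  obtain ⟨hne, p, hpx, hpy⟩ := hxy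
  have getChain : ∀ z : X, T.E p (T.leaf z) →
      ∃ c, S (φ p) c ∧ Chain N c z := by
    intro z hpz
    have hp1 := hpath p (T.leaf z) hpz
    unfold pathAvoid at hp1
    rw [hleaf z] at hp1
    have hne1 : φ p ≠ N.leaf z := by
      intro h
      have heq : p = T.leaf z := hφ (by rw [h, ← hleaf z])
      rw [heq] at hpz
      exact hT.1.acyclic _ (Relation.TransGen.single hpz)
    rcases Relation.ReflTransGen.cases_head hp1 with h | ⟨c, ⟨hSc, hcond⟩, hrest⟩
    · exact absurd h hne1
    · exact ⟨c, hSc, ChainOf hB hTC hT hS hleaf hdeg hsup hrest hcond⟩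
  obtain ⟨c₁, hS1, hch1⟩ := getChain x hpx
  obtain ⟨c₂, hS2, hch2⟩ := getChain y hpy
  have hc12 : c₁ ≠ c₂ := by
    rintro rfl
    exact hne (Chain_unique hB hch1 hch2)
  exact ⟨φ p, c₁, c₂, hS _ _ hS1, hS _ _ hS2, hc12, hch1, hch2⟩

end WithDisplay
end Extract

section Count
set_option linter.unusedVariables false
set_option maxHeartbeats 1000000

open Relation

variable {V X : Type} [Fintype X] {N : Net V X}

lemma ret_not_leaf (hB : N.IsBinaryNet) {v : V} (h : 2 ≤ N.inDeg v) : ¬ N.IsLeaf v := by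
  intro hl
  obtain ⟨x, hx⟩ := hB.leafSurj v hl
  have h1 := hB.leafIn x
  rw [hx] at h1
  omega

lemma root_not_leaf [Finite V] (hB : N.IsBinaryNet) (hX : 2 ≤ Fintype.card X) :
    ¬ N.IsLeaf N.root := by
  intro hl
  obtain ⟨x, y, hxy⟩ := Fintype.exists_pair_of_one_lt_card (by omega : 1 < Fintype.card X)
  have triv : ∀ z : V, Relation.ReflTransGen N.E N.root z → z = N.root := by
    intro z hz
    rcases Relation.ReflTransGen.cases_head hz with h | ⟨c, hc, _⟩
    · exact h.symm
    · exact absurd hl (not_isLeaf_of_edge hc)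
  have h1 := triv _ (hB.reach (N.leaf x))
  have h2 := triv _ (hB.reach (N.leaf y))
  exact hxy (hB.leafInj (h1.trans h2.symm))

lemma handshake [Fintype V] (N : Net V X) :
    ∑ v : V, N.outDeg v = ∑ v : V, N.inDeg v := by
  classical
  have ho : ∀ v : V, N.outDeg v = (Finset.univ.filter (fun w => N.E v w)).card := by
    intro v
    rw [Net.outDeg, show {w | N.E v w} = ↑(Finset.univ.filter (fun w => N.E v w)) by
      ext w; simp]
    exact Set.ncard_coe_finset _
  have hi : ∀ v : V, N.inDeg v = (Finset.univ.filter (fun u => N.E u v)).card := by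
    intro v
    rw [Net.inDeg, show {u | N.E u v} = ↑(Finset.univ.filter (fun u => N.E u v)) by
      ext w; simp]
    exact Set.ncard_coe_finset _
  simp_rw [ho, hi, Finset.card_filter]
  exact Finset.sum_comm

lemma counts [Fintype V] (hB : N.IsBinaryNet) (hX : 2 ≤ Fintype.card X) :
    ({v : V | N.outDeg v ≠ 0 ∧ N.inDeg v ≤ 1}).ncard + 1
      = Fintype.card X + ({v : V | 2 ≤ N.inDeg v}).ncard := by
  classical
  have hncT : ({v : V | N.outDeg v ≠ 0 ∧ N.inDeg v ≤ 1}).ncard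
      = ∑ v : V, (if N.outDeg v ≠ 0 ∧ N.inDeg v ≤ 1 then 1 else 0) := by
    rw [show {v : V | N.outDeg v ≠ 0 ∧ N.inDeg v ≤ 1}
        = ↑(Finset.univ.filter (fun v : V => N.outDeg v ≠ 0 ∧ N.inDeg v ≤ 1)) by ext w; simp,
      Set.ncard_coe_finset, Finset.card_filter]
  have hncR : ({v : V | 2 ≤ N.inDeg v}).ncard
      = ∑ v : V, (if 2 ≤ N.inDeg v then 1 else 0) := by
    rw [show {v : V | 2 ≤ N.inDeg v}
        = ↑(Finset.univ.filter (fun v : V => 2 ≤ N.inDeg v)) by ext w; simp,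
      Set.ncard_coe_finset, Finset.card_filter]
  have hroot_nl : ¬ N.IsLeaf N.root := root_not_leaf hB hX
  have hleafdeg : ∀ v : V, N.IsLeaf v → N.inDeg v = 1 := by
    intro v hl
    obtain ⟨x, hx⟩ := hB.leafSurj v hl
    rw [← hx]; exact hB.leafIn x
  have h1 : ∀ v : V, N.outDeg v =
      2 * (if (N.outDeg v ≠ 0 ∧ N.inDeg v ≤ 1) then 1 else 0)
        + (if 2 ≤ N.inDeg v then 1 else 0) := by
    intro v
    by_cases hl : N.IsLeaf v
    · have h0 : N.outDeg v = 0 := hl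
      have h1' := hleafdeg v hl
      have hT : ¬ (N.outDeg v ≠ 0 ∧ N.inDeg v ≤ 1) := by
        rintro ⟨hc, _⟩; omega
      rw [if_neg hT, if_neg (by omega)]
      omega
    · rcases hB.deg v hl with h | h
      · have hnz : N.outDeg v ≠ 0 := fun h0 => hl h0
        rw [if_pos (show N.outDeg v ≠ 0 ∧ N.inDeg v ≤ 1 from ⟨hnz, h.1⟩), if_neg (by omega)]
        omega
      · have hT : ¬ (N.outDeg v ≠ 0 ∧ N.inDeg v ≤ 1) := by
          rintro ⟨_, hc⟩; omega
        rw [if_neg hT, if_pos (by omega)]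
        omega
  have h2 : ∀ v : V, N.inDeg v + (if v = N.root then 1 else 0) =
      (if N.outDeg v = 0 then 1 else 0)
        + (if (N.outDeg v ≠ 0 ∧ N.inDeg v ≤ 1) then 1 else 0)
        + 2 * (if 2 ≤ N.inDeg v then 1 else 0) := by
    intro v
    by_cases hl : N.IsLeaf v
    · have h0 : N.outDeg v = 0 := hl
      have h1' := hleafdeg v hl
      have hvr : v ≠ N.root := by rintro rfl; exact hroot_nl hl
      have hT : ¬ (N.outDeg v ≠ 0 ∧ N.inDeg v ≤ 1) := by
        rintro ⟨hc, _⟩; omega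
      rw [if_neg hvr, if_pos h0, if_neg hT, if_neg (by omega)]
      omega
    · rcases hB.deg v hl with h | h
      · have hnz : N.outDeg v ≠ 0 := fun h0 => hl h0
        have hT : N.outDeg v ≠ 0 ∧ N.inDeg v ≤ 1 := ⟨hnz, h.1⟩
        by_cases hvr : v = N.root
        · have h0 : N.inDeg v = 0 := by rw [hvr]; exact hB.rootIn
          rw [if_pos hvr, if_neg hnz, if_pos hT, if_neg (by omega)]
          omega
        · have hge : 1 ≤ N.inDeg v := by
            rcases root_or_parent hB v with h' | h'
            · exact absurd h' hvr
            · exact h'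
          rw [if_neg hvr, if_neg hnz, if_pos hT, if_neg (by omega)]
          omega
      · have hvr : v ≠ N.root := by
          rintro rfl
          have := hB.rootIn
          omega
        have hnz : N.outDeg v ≠ 0 := fun h0 => hl h0
        have hT : ¬ (N.outDeg v ≠ 0 ∧ N.inDeg v ≤ 1) := by
          rintro ⟨_, hc⟩; omega
        rw [if_neg hvr, if_neg hnz, if_neg hT, if_pos (by omega)]
        omega
  have hsum := handshake N
  have e1 : ∑ v : V, N.outDeg v =
      2 * (∑ v : V, (if (N.outDeg v ≠ 0 ∧ N.inDeg v ≤ 1) then 1 else 0))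
        + ∑ v : V, (if 2 ≤ N.inDeg v then 1 else 0) := by
    rw [Finset.sum_congr rfl (fun v _ => h1 v), Finset.sum_add_distrib, Finset.mul_sum]
  have e2 : (∑ v : V, N.inDeg v) + 1 =
      (∑ v : V, (if N.outDeg v = 0 then 1 else 0))
        + (∑ v : V, (if (N.outDeg v ≠ 0 ∧ N.inDeg v ≤ 1) then 1 else 0))
        + 2 * (∑ v : V, (if 2 ≤ N.inDeg v then 1 else 0)) := by
    have := Finset.sum_congr rfl (fun v (_ : v ∈ Finset.univ) => h2 v)
    rw [Finset.sum_add_distrib] at this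
    rw [show (∑ v : V, (if v = N.root then 1 else 0)) = 1 by
      simp]
      at this
    rw [this, Finset.sum_add_distrib, Finset.sum_add_distrib, Finset.mul_sum]
  have e3 : (∑ v : V, (if N.outDeg v = 0 then 1 else 0)) = Fintype.card X := by
    rw [← Finset.card_filter]
    have himg : Finset.univ.filter (fun v : V => N.outDeg v = 0) = Finset.univ.image N.leaf := by
      ext v
      simp only [Finset.mem_filter, Finset.mem_univ, true_and, Finset.mem_image]
      constructor
      · intro h
        obtain ⟨x, hx⟩ := hB.leafSurj v h
        exact ⟨x, hx⟩
      · rintro ⟨x, _, rfl⟩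
        exact hB.leafIsLeaf x
    rw [himg, Finset.card_image_of_injective _ hB.leafInj, Finset.card_univ]
  rw [hncT, hncR]
  omega

end Count

section Final
set_option linter.unusedVariables false
set_option maxHeartbeats 1000000

open Relation

variable {V X : Type} [Fintype X] {N : Net V X}

lemma ncard_filter_card [Fintype V] (p : V → Prop) [DecidablePred p] :
    ({v : V | p v}).ncard = (Finset.univ.filter p).card := by
  rw [show {v : V | p v} = ↑(Finset.univ.filter p) by ext w; simp, Set.ncard_coe_finset]

lemma rets_bound [Fintype V] (hB : N.IsBinaryNet) (hTC : N.TreeChild) :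
    ({v : V | 2 ≤ N.inDeg v}).ncard + 1 ≤ Fintype.card X := by
  classical
  set g : V → X := fun v => Classical.choose (descend hB hTC v) with hg
  have hgs : ∀ v, Relation.ReflTransGen (TEdge N) v (N.leaf (g v)) :=
    fun v => Classical.choose_spec (descend hB hTC v)
  set S0 : Finset V := insert N.root (Finset.univ.filter (fun v : V => 2 ≤ N.inDeg v)) with hS0
  have hpred : ∀ v ∈ S0, v = N.root ∨ 2 ≤ N.inDeg v := by
    intro v hv
    rcases Finset.mem_insert.1 hv with h | h
    · exact Or.inl h
    · exact Or.inr (Finset.mem_filter.1 h).2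
  have hinj : Set.InjOn g S0 := by
    intro u hu v hv he
    exact climb_unique hB (N.leaf (g u)) u v (hpred u hu) (hpred v hv) (hgs u)
      (by rw [he]; exact hgs v)
  have hcard : S0.card ≤ Fintype.card X := by
    have := Finset.card_le_card_of_injOn g (fun k _ => Finset.mem_univ (g k)) hinj
    simpa using this
  have : S0.card = (Finset.univ.filter (fun v : V => 2 ≤ N.inDeg v)).card + 1 := by
    rw [hS0, Finset.card_insert_of_notMem]
    intro h
    have := (Finset.mem_filter.1 h).2
    have := hB.rootIn
    omega
  rw [ncard_filter_card]
  omega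

lemma unique_leaf [Fintype V] (hB : N.IsBinaryNet) (hTC : N.TreeChild)
    (hcard : ({v : V | 2 ≤ N.inDeg v}).ncard + 1 = Fintype.card X) :
    ∀ ρ x y, (ρ = N.root ∨ 2 ≤ N.inDeg ρ) →
      Relation.ReflTransGen (TEdge N) ρ (N.leaf x) →
      Relation.ReflTransGen (TEdge N) ρ (N.leaf y) → x = y := by
  classical
  set lc : X → V := fun x => Classical.choose (climb_exists hB (N.leaf x)) with hlc
  have hlcs : ∀ x, (lc x = N.root ∨ 2 ≤ N.inDeg (lc x)) ∧
      Relation.ReflTransGen (TEdge N) (lc x) (N.leaf x) :=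
    fun x => Classical.choose_spec (climb_exists hB (N.leaf x))
  set S0 : Finset V := insert N.root (Finset.univ.filter (fun v : V => 2 ≤ N.inDeg v)) with hS0
  have hmemS0 : ∀ v : V, (v = N.root ∨ 2 ≤ N.inDeg v) → v ∈ S0 := by
    intro v hv
    rcases hv with rfl | hv
    · exact Finset.mem_insert_self _ _
    · exact Finset.mem_insert_of_mem (Finset.mem_filter.2 ⟨Finset.mem_univ v, hv⟩)
  have hS0card : S0.card = Fintype.card X := by
    rw [hS0, Finset.card_insert_of_notMem (by
      intro h
      have := (Finset.mem_filter.1 h).2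
      have := hB.rootIn
      omega)]
    rw [ncard_filter_card] at hcard
    omega
  -- lc is surjective onto S0
  have hsurj : ∀ v ∈ S0, ∃ x ∈ Finset.univ, lc x = v := by
    intro v hv
    obtain ⟨x, hx⟩ := descend hB hTC v
    refine ⟨x, Finset.mem_univ x, ?_⟩
    exact climb_unique hB (N.leaf x) (lc x) v (hlcs x).1
      (by rcases Finset.mem_insert.1 hv with h | h
          · exact Or.inl h
          · exact Or.inr (Finset.mem_filter.1 h).2)
      (hlcs x).2 hx
  have hinj : ∀ x y : X, lc x = lc y → x = y := by
    intro x y he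
    exact Finset.inj_on_of_surj_on_of_card_le (fun x _ => lc x)
      (fun x _ => hmemS0 (lc x) (hlcs x).1)
      (fun v hv => by obtain ⟨x, hx, he⟩ := hsurj v hv; exact ⟨x, hx, he⟩)
      (by rw [hS0card, Finset.card_univ]) (Finset.mem_univ x) (Finset.mem_univ y) he
  intro ρ x y hρ hx hy
  have h1 : lc x = ρ := climb_unique hB (N.leaf x) (lc x) ρ (hlcs x).1 hρ (hlcs x).2 hx
  have h2 : lc y = ρ := climb_unique hB (N.leaf y) (lc y) ρ (hlcs y).1 hρ (hlcs y).2 hy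
  exact hinj x y (h1.trans h2.symm)

theorem no_host_family [Finite V] {N : Net V X} (hB : N.IsBinaryNet) (hTC : N.TreeChild)
    {K : Type} [Fintype K] (a b : K → X)
    (hdist : ∀ k k', s(a k, b k) = s(a k', b k') → k = k')
    (hosts : ∀ k, ∃ v, Host N v (a k) (b k))
    (hK : Fintype.card K = 2 * Fintype.card X - 2) (hX : 5 ≤ Fintype.card X) : False := by
  classical
  cases nonempty_fintype V
  set Tfin : Finset V := Finset.univ.filter (fun v : V => N.outDeg v ≠ 0 ∧ N.inDeg v ≤ 1)
    with hTfin
  set Rfin : Finset V := Finset.univ.filter (fun v : V => 2 ≤ N.inDeg v) with hRfin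
  set h : K → V := fun k => Classical.choose (hosts k) with hh
  have hhs : ∀ k, Host N (h k) (a k) (b k) := fun k => Classical.choose_spec (hosts k)
  have hinj : Function.Injective h := by
    intro k k' he
    exact hdist k k' (Host_unique hB (hhs k) (by rw [he]; exact hhs k'))
  have hmem : ∀ k, h k ∈ Tfin := by
    intro k
    obtain ⟨h1, h2⟩ := Host_treeNode hB (hhs k)
    exact Finset.mem_filter.2 ⟨Finset.mem_univ _, h1, h2⟩
  have hKle : Fintype.card K ≤ Tfin.card := by
    have := Finset.card_le_card_of_injOn (s := (Finset.univ : Finset K)) (t := Tfin) h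
      (fun k _ => hmem k) (Function.Injective.injOn hinj)
    simpa using this
  have hcounts := counts hB (by omega)
  rw [ncard_filter_card, ncard_filter_card, ← hTfin, ← hRfin] at hcounts
  have hrets := rets_bound hB hTC
  rw [ncard_filter_card, ← hRfin] at hrets
  -- deduce equalities
  have hTcard : Tfin.card = 2 * Fintype.card X - 2 := by omega
  have hRcard : Rfin.card + 1 = Fintype.card X := by omega
  -- h is surjective onto Tfin
  have himg : Finset.univ.image h = Tfin := by
    apply Finset.eq_of_subset_of_card_le
    · intro v hv
      obtain ⟨k, _, rfl⟩ := Finset.mem_image.1 hv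
      exact hmem k
    · rw [Finset.card_image_of_injective _ hinj, Finset.card_univ]
      omega
  have hsurj : ∀ v ∈ Tfin, ∃ k, h k = v := by
    intro v hv
    rw [← himg] at hv
    obtain ⟨k, _, he⟩ := Finset.mem_image.1 hv
    exact ⟨k, he⟩
  have hUL := unique_leaf hB hTC (by rw [ncard_filter_card, ← hRfin]; omega)
  -- a minimal reticulation
  have hRne : ({v : V | 2 ≤ N.inDeg v}).Nonempty := by
    have hc : Rfin.card ≠ 0 := by omega
    obtain ⟨v, hv⟩ := Finset.card_ne_zero.1 hc
    rw [hRfin] at hv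
    exact ⟨v, (Finset.mem_filter.1 hv).2⟩
  obtain ⟨ρ, hρmem, hρmin⟩ := (wf_up hB.acyclic).has_min {v : V | 2 ≤ N.inDeg v} hRne
  have hρret : 2 ≤ N.inDeg ρ := hρmem
  have hρdeg : N.inDeg ρ = 2 := by
    rcases hB.deg ρ (ret_not_leaf hB hρret) with h' | h'
    · omega
    · exact h'.1
  obtain ⟨p₁, p₂, hp12, hpset⟩ := Set.ncard_eq_two.1 (hρdeg : ({u | N.E u ρ}).ncard = 2)
  have hep : ∀ q ∈ ({p₁, p₂} : Set V), N.E q ρ := by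
    intro q hq
    rw [← hpset] at hq
    exact hq
  have hep₁ : N.E p₁ ρ := hep p₁ (by simp)
  have hep₂ : N.E p₂ ρ := hep p₂ (by simp)
  -- the leaf below ρ and below the root
  set Lρ : X := Classical.choose (descend hB hTC ρ) with hLρ
  have hLρs : Relation.ReflTransGen (TEdge N) ρ (N.leaf Lρ) :=
    Classical.choose_spec (descend hB hTC ρ)
  set L0 : X := Classical.choose (descend hB hTC N.root) with hL0
  have hL0s : Relation.ReflTransGen (TEdge N) N.root (N.leaf L0) :=
    Classical.choose_spec (descend hB hTC N.root)
  -- key claim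
  have key : ∀ p, N.E p ρ → ∀ x y, Host N p x y → s(x, y) = s(L0, Lρ) := by
    intro p hpρ x y hH
    have hpt : N.inDeg p ≤ 1 := by
      by_contra hc
      push_neg at hc
      exact hρmin p (by exact (by omega : 2 ≤ N.inDeg p)) (Relation.TransGen.single hpρ)
    obtain ⟨c₁, c₂, he₁, he₂, hcne, ch₁, ch₂⟩ := hH
    have hout2 : N.outDeg p = 2 := (outDeg_two hB he₁ he₂ hcne).2
    have hchild : ({z | N.E p z} : Set V) = {c₁, c₂} :=
      pair_of_ncard_two hout2 he₁ he₂ hcne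
    have hρc : ρ = c₁ ∨ ρ = c₂ := by
      have : ρ ∈ ({c₁, c₂} : Set V) := hchild ▸ hpρ
      simpa using this
    -- p is in the root component
    have hproot : Relation.ReflTransGen (TEdge N) N.root p := by
      obtain ⟨ρp, hρppred, hρppath⟩ := climb_exists hB p
      rcases hρppred with rfl | hρpret
      · exact hρppath
      · exfalso
        exact hρmin ρp hρpret
          (Relation.TransGen.tail' (rtg_mono (fun u v hv => hv.1) hρppath) hpρ)
    have chainρ : ∀ z, Chain N ρ z → z = Lρ := by
      intro z hz
      rcases hz with hz | ⟨_, d, hed, htch⟩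
      · exact absurd (TChain_not_ret hB hz) (by omega)
      · have hdt : N.inDeg d ≤ 1 := TChain_not_ret hB htch
        have hpath : Relation.ReflTransGen (TEdge N) ρ (N.leaf z) :=
          Relation.ReflTransGen.head ⟨hed, hdt⟩ (TChain_TE_path htch)
        exact hUL ρ z Lρ (Or.inr hρret) hpath hLρs
    have chainT : ∀ c z, N.E p c → N.inDeg c ≤ 1 → Chain N c z → z = L0 := by
      intro c z hec hct hz
      rcases hz with hz | ⟨hcr, _, _, _⟩
      · have hpath : Relation.ReflTransGen (TEdge N) N.root (N.leaf z) :=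
          (hproot.tail ⟨hec, hct⟩).trans (TChain_TE_path hz)
        exact hUL N.root z L0 (Or.inl rfl) hpath hL0s
      · omega
    -- the other child of p is a tree node
    obtain ⟨zt, hezt, hztt⟩ := hTC p (not_isLeaf_of_edge he₁)
    have hztc : zt = c₁ ∨ zt = c₂ := by
      have : zt ∈ ({c₁, c₂} : Set V) := hchild ▸ hezt
      simpa using this
    rcases hρc with rfl | rfl
    · -- ρ = c₁
      have hc₂t : N.inDeg c₂ ≤ 1 := by
        rcases hztc with rfl | rfl
        · exact absurd hztt (by unfold Net.IsTreeNode; omega)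
        · exact hztt
      have hx := chainρ x ch₁
      have hy := chainT c₂ y he₂ hc₂t ch₂
      rw [hx, hy]
      exact Sym2.eq_swap
    · -- ρ = c₂
      have hc₁t : N.inDeg c₁ ≤ 1 := by
        rcases hztc with rfl | rfl
        · exact hztt
        · exact absurd hztt (by unfold Net.IsTreeNode; omega)
      have hy := chainρ y ch₂
      have hx := chainT c₁ x he₁ hc₁t ch₁
      rw [hx, hy]
  -- finish
  have hpmem : ∀ q, N.E q ρ → q ∈ Tfin := by
    intro q hq
    have hqt : N.inDeg q ≤ 1 := by
      by_contra hc
      push_neg at hc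
      exact hρmin q (by exact (by omega : 2 ≤ N.inDeg q)) (Relation.TransGen.single hq)
    exact Finset.mem_filter.2 ⟨Finset.mem_univ _, not_isLeaf_of_edge hq, hqt⟩
  obtain ⟨k₁, hk₁⟩ := hsurj p₁ (hpmem p₁ hep₁)
  obtain ⟨k₂, hk₂⟩ := hsurj p₂ (hpmem p₂ hep₂)
  have hk12 : k₁ ≠ k₂ := by
    rintro rfl
    rw [hk₁] at hk₂
    exact hp12 hk₂
  have e₁ : s(a k₁, b k₁) = s(L0, Lρ) := key p₁ hep₁ _ _ (hk₁ ▸ hhs k₁)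
  have e₂ : s(a k₂, b k₂) = s(L0, Lρ) := key p₂ hep₂ _ _ (hk₂ ▸ hhs k₂)
  exact hk12 (hdist k₁ k₂ (e₁.trans e₂.symm))

end Final

section TreeCon
set_option linter.unusedVariables false
set_option maxHeartbeats 1000000

open Relation

/-- Vertices of a caterpillar tree: spine nodes, cherry parents, leaves. -/
abbrev catV (m n : ℕ) : Type := Fin m ⊕ (Fin m ⊕ Fin n)

def catE {m n : ℕ} (f g : Fin m → Fin n) (c : Fin n) : catV m n → catV m n → Prop :=
  fun u v =>
    match u, v with
    | .inl i, .inl j => (j : ℕ) = (i : ℕ) + 1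
    | .inl i, .inr (.inl j) => j = i
    | .inl i, .inr (.inr x) => (i : ℕ) = m - 1 ∧ x = c
    | .inr (.inl i), .inr (.inr x) => x = f i ∨ x = g i
    | _, _ => False

def catT {m n : ℕ} (hm : 0 < m) (f g : Fin m → Fin n) (c : Fin n) :
    Net (catV m n) (Fin n) where
  E := catE f g c
  root := .inl ⟨0, hm⟩
  leaf := fun x => .inr (.inr x)

/-- Encoding of the taxa partition for a caterpillar tree. -/
def catCode {m n : ℕ} (f g : Fin m → Fin n) (c : Fin n) : Fin m ⊕ (Fin m ⊕ Unit) → Fin n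
  | .inl i => f i
  | .inr (.inl i) => g i
  | .inr (.inr _) => c

lemma acyclic_of_rank {V : Type} {E : V → V → Prop} (r : V → ℕ)
    (h : ∀ u v, E u v → r u < r v) : ∀ v, ¬ Relation.TransGen E v v := by
  have key : ∀ u v, Relation.TransGen E u v → r u < r v := by
    intro u v huv
    induction huv with
    | single h1 => exact h _ _ h1
    | tail h1 h2 ih => exact lt_trans ih (h _ _ h2)
  intro v hv
  exact lt_irrefl _ (key v v hv)

section CatFacts

variable {m n : ℕ} (hm : 0 < m) (f g : Fin m → Fin n) (c : Fin n)
  (he : Function.Bijective (catCode f g c))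

include he

lemma cat_finj : ∀ i j : Fin m, f i = f j → i = j := by
  intro i j h
  have := he.1 (a₁ := .inl i) (a₂ := .inl j) h
  simpa using this

lemma cat_ginj : ∀ i j : Fin m, g i = g j → i = j := by
  intro i j h
  have := he.1 (a₁ := .inr (.inl i)) (a₂ := .inr (.inl j)) h
  simpa using this

lemma cat_fg : ∀ i j : Fin m, f i ≠ g j := by
  intro i j h
  have := he.1 (a₁ := .inl i) (a₂ := .inr (.inl j)) h
  simpa using this

lemma cat_fc : ∀ i : Fin m, f i ≠ c := by
  intro i h
  have := he.1 (a₁ := .inl i) (a₂ := .inr (.inr ())) h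
  simpa using this

lemma cat_gc : ∀ i : Fin m, g i ≠ c := by
  intro i h
  have := he.1 (a₁ := .inr (.inl i)) (a₂ := .inr (.inr ())) h
  simpa using this

lemma cat_cover : ∀ x : Fin n, x = c ∨ ∃ i, x = f i ∨ x = g i := by
  intro x
  obtain ⟨z, hz⟩ := he.2 x
  rcases z with i | i | u
  · exact Or.inr ⟨i, Or.inl hz.symm⟩
  · exact Or.inr ⟨i, Or.inr hz.symm⟩
  · exact Or.inl hz.symm

end CatFacts
end TreeCon

section CatDeg
set_option linter.unusedVariables false
set_option maxHeartbeats 1000000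

open Relation

variable {m n : ℕ} (hm : 0 < m) (f g : Fin m → Fin n) (c : Fin n)
  (he : Function.Bijective (catCode f g c))

lemma cat_outSpine (i : Fin m) : (catT hm f g c).outDeg (.inl i) = 2 := by
  show ({w | catE f g c (.inl i) w}).ncard = 2
  by_cases hi : (i : ℕ) + 1 < m
  · have hs : {w | catE f g c (.inl i) w}
        = {Sum.inl ⟨(i : ℕ) + 1, hi⟩, Sum.inr (Sum.inl i)} := by
      ext w
      rcases w with j | j | x
      · simp only [Set.mem_setOf_eq, Set.mem_insert_iff, Set.mem_singleton_iff]
        simp [catE, Fin.ext_iff]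
      · simp only [Set.mem_setOf_eq, Set.mem_insert_iff, Set.mem_singleton_iff]
        simp [catE]
      · simp only [Set.mem_setOf_eq, Set.mem_insert_iff, Set.mem_singleton_iff]
        simp only [catE]
        constructor
        · rintro ⟨h1, _⟩
          have := i.isLt
          omega
        · rintro (h | h) <;> simp_all
    rw [hs]
    exact Set.ncard_pair (by simp)
  · have him : (i : ℕ) = m - 1 := by have := i.isLt; omega
    have hs : {w | catE f g c (.inl i) w}
        = {Sum.inr (Sum.inl i), Sum.inr (Sum.inr c)} := by
      ext w
      rcases w with j | j | x
      · simp only [Set.mem_setOf_eq, Set.mem_insert_iff, Set.mem_singleton_iff]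
        simp only [catE]
        constructor
        · intro h1
          have := j.isLt
          omega
        · rintro (h | h) <;> simp_all
      · simp only [Set.mem_setOf_eq, Set.mem_insert_iff, Set.mem_singleton_iff]
        simp [catE]
      · simp only [Set.mem_setOf_eq, Set.mem_insert_iff, Set.mem_singleton_iff]
        simp only [catE]
        constructor
        · rintro ⟨_, rfl⟩
          simp
        · rintro (h | h)
          · exact absurd h (by simp)
          · simp_all [him]
    rw [hs]
    exact Set.ncard_pair (by simp)

include he

lemma cat_outParent (i : Fin m) : (catT hm f g c).outDeg (.inr (.inl i)) = 2 := by
  show ({w | catE f g c (.inr (.inl i)) w}).ncard = 2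
  have hs : {w | catE f g c (.inr (.inl i)) w}
      = {Sum.inr (Sum.inr (f i)), Sum.inr (Sum.inr (g i))} := by
    ext w
    rcases w with j | j | x <;>
      simp [catE]
  rw [hs]
  exact Set.ncard_pair (by simp; exact cat_fg f g c he i i)

omit he in
lemma cat_outLeaf (x : Fin n) : (catT hm f g c).outDeg (.inr (.inr x)) = 0 := by
  show ({w | catE f g c (.inr (.inr x)) w}).ncard = 0
  have hs : {w | catE f g c (.inr (.inr x)) w} = ∅ := by
    ext w
    rcases w with j | j | y <;> simp [catE]
  rw [hs, Set.ncard_empty]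

omit he in
lemma cat_inSpine_zero (i : Fin m) (h : (i : ℕ) = 0) :
    (catT hm f g c).inDeg (.inl i) = 0 := by
  show ({u | catE f g c u (.inl i)}).ncard = 0
  have hs : {u | catE f g c u (.inl i)} = ∅ := by
    ext u
    rcases u with j | j | y <;> simp [catE] <;> omega
  rw [hs, Set.ncard_empty]

omit he in
lemma cat_inSpine_succ (i : Fin m) (h : 0 < (i : ℕ)) :
    (catT hm f g c).inDeg (.inl i) = 1 := by
  show ({u | catE f g c u (.inl i)}).ncard = 1
  have hs : {u | catE f g c u (.inl i)}
      = {Sum.inl ⟨(i : ℕ) - 1, by have := i.isLt; omega⟩} := by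
    ext u
    rcases u with j | j | y <;> simp [catE, Fin.ext_iff] <;> omega
  rw [hs, Set.ncard_singleton]

omit he in
lemma cat_inParent (i : Fin m) : (catT hm f g c).inDeg (.inr (.inl i)) = 1 := by
  show ({u | catE f g c u (.inr (.inl i))}).ncard = 1
  have hs : {u | catE f g c u (.inr (.inl i))} = {Sum.inl i} := by
    ext u
    rcases u with j | j | y <;> simp [catE, eq_comm]
  rw [hs, Set.ncard_singleton]

lemma cat_inLeaf_c : (catT hm f g c).inDeg (.inr (.inr c)) = 1 := by
  show ({u | catE f g c u (.inr (.inr c))}).ncard = 1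
  · have hs : {u | catE f g c u (.inr (.inr c))}
        = {Sum.inl ⟨m - 1, by omega⟩} := by
      ext u
      rcases u with j | j | y
      · simp [catE, Fin.ext_iff]
      · simp only [Set.mem_setOf_eq, Set.mem_singleton_iff]
        simp only [catE]
        constructor
        · rintro (h | h)
          · exact absurd h.symm (cat_fc f g c he j)
          · exact absurd h.symm (cat_gc f g c he j)
        · intro h
          exact absurd h (by simp)
      · simp [catE]
    rw [hs, Set.ncard_singleton]

lemma cat_inLeaf_f (i : Fin m) : (catT hm f g c).inDeg (.inr (.inr (f i))) = 1 := by
  show ({u | catE f g c u (.inr (.inr (f i)))}).ncard = 1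
  · have hs : {u | catE f g c u (.inr (.inr (f i)))} = {Sum.inr (Sum.inl i)} := by
      ext u
      rcases u with j | j | y
      · simp only [Set.mem_setOf_eq, Set.mem_singleton_iff]
        simp only [catE]
        constructor
        · rintro ⟨_, h⟩
          exact absurd h (cat_fc f g c he i)
        · intro h
          exact absurd h (by simp)
      · simp only [Set.mem_setOf_eq, Set.mem_singleton_iff]
        simp only [catE, Sum.inr.injEq, Sum.inl.injEq]
        constructor
        · rintro (h | h)
          · exact (cat_finj f g c he i j h).symm
          · exact absurd h (cat_fg f g c he i j)
        · rintro rfl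
          exact Or.inl rfl
      · simp [catE]
    rw [hs, Set.ncard_singleton]

lemma cat_inLeaf_g (i : Fin m) : (catT hm f g c).inDeg (.inr (.inr (g i))) = 1 := by
  show ({u | catE f g c u (.inr (.inr (g i)))}).ncard = 1
  · have hs : {u | catE f g c u (.inr (.inr (g i)))} = {Sum.inr (Sum.inl i)} := by
      ext u
      rcases u with j | j | y
      · simp only [Set.mem_setOf_eq, Set.mem_singleton_iff]
        simp only [catE]
        constructor
        · rintro ⟨_, h⟩
          exact absurd h (cat_gc f g c he i)
        · intro h
          exact absurd h (by simp)
      · simp only [Set.mem_setOf_eq, Set.mem_singleton_iff]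
        simp only [catE, Sum.inr.injEq, Sum.inl.injEq]
        constructor
        · rintro (h | h)
          · exact absurd h.symm (cat_fg f g c he j i)
          · exact (cat_ginj f g c he i j h).symm
        · rintro rfl
          exact Or.inr rfl
      · simp [catE]
    rw [hs, Set.ncard_singleton]

lemma cat_inLeaf (x : Fin n) : (catT hm f g c).inDeg (.inr (.inr x)) = 1 := by
  obtain hx | ⟨i, hx | hx⟩ := cat_cover f g c he x <;> rw [hx]
  · exact cat_inLeaf_c hm f g c he
  · exact cat_inLeaf_f hm f g c he i
  · exact cat_inLeaf_g hm f g c he i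

end CatDeg

section CatTree
set_option linter.unusedVariables false
set_option maxHeartbeats 1000000

open Relation

def catRank {m n : ℕ} : catV m n → ℕ :=
  fun v => match v with
  | .inl i => (i : ℕ)
  | .inr (.inl i) => m + (i : ℕ)
  | .inr (.inr _) => 2 * m

variable {m n : ℕ} (hm : 0 < m) (f g : Fin m → Fin n) (c : Fin n)
  (he : Function.Bijective (catCode f g c))

include he

lemma cat_inDeg_le (v : catV m n) : (catT hm f g c).inDeg v ≤ 1 := by
  rcases v with i | i | x
  · rcases Nat.eq_zero_or_pos (i : ℕ) with h | h
    · rw [cat_inSpine_zero hm f g c i h]; omega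
    · rw [cat_inSpine_succ hm f g c i h]
  · rw [cat_inParent hm f g c i]
  · rw [cat_inLeaf hm f g c he x]

omit he in
lemma cat_rank_lt : ∀ u v, catE f g c u v → catRank u < catRank v := by
  intro u v h
  rcases u with i | i | x <;> rcases v with j | j | y <;>
    simp only [catE, catRank] at h ⊢ <;>
    first
      | omega
      | (exact absurd h (by simp))
      | (have := i.isLt; have := j.isLt; omega)
      | (have := i.isLt; omega)

omit he in
lemma cat_spine_reach : ∀ (k : ℕ) (hk : k < m),
    Relation.ReflTransGen (catE f g c) (.inl ⟨0, hm⟩) (.inl ⟨k, hk⟩) := by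
  intro k
  induction k with
  | zero => intro hk; exact .refl
  | succ k ih =>
      intro hk
      exact (ih (by omega)).tail (show catE f g c (.inl ⟨k, by omega⟩) (.inl ⟨k+1, hk⟩) by
        simp [catE])

omit he in
lemma cat_reach_spine (i : Fin m) :
    Relation.ReflTransGen (catE f g c) (.inl ⟨0, hm⟩) (.inl i) := by
  have := cat_spine_reach hm f g c (i : ℕ) i.isLt
  simpa using this

omit he in
lemma cat_reach_parent (i : Fin m) :
    Relation.ReflTransGen (catE f g c) (.inl ⟨0, hm⟩) (.inr (.inl i)) :=
  (cat_reach_spine hm f g c i).tail (show catE f g c (.inl i) (.inr (.inl i)) from rfl)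

lemma cat_reach (v : catV m n) :
    Relation.ReflTransGen (catE f g c) (.inl ⟨0, hm⟩) v := by
  rcases v with i | i | x
  · exact cat_reach_spine hm f g c i
  · exact cat_reach_parent hm f g c i
  · obtain hx | ⟨i, hx | hx⟩ := cat_cover f g c he x <;> rw [hx]
    · exact (cat_reach_spine hm f g c ⟨m - 1, by omega⟩).tail
        (show catE f g c (.inl ⟨m-1, by omega⟩) (.inr (.inr c)) from ⟨rfl, rfl⟩)
    · exact (cat_reach_parent hm f g c i).tail (Or.inl rfl)
    · exact (cat_reach_parent hm f g c i).tail (Or.inr rfl)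

theorem catT_isBinaryTree : (catT hm f g c).IsBinaryTree := by
  have hphylo : (catT hm f g c).IsPhylo :=
    { acyclic := acyclic_of_rank catRank (cat_rank_lt f g c)
      rootIn := cat_inSpine_zero hm f g c ⟨0, hm⟩ rfl
      reach := cat_reach hm f g c he
      leafInj := fun x y h => by
        have h' : (Sum.inr (Sum.inr x) : catV m n) = Sum.inr (Sum.inr y) := h
        simpa using h'
      leafIsLeaf := fun x => cat_outLeaf hm f g c x
      leafSurj := by
        intro v hv
        rcases v with i | i | x
        · have := cat_outSpine hm f g c i
          unfold Net.IsLeaf at hv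
          omega
        · have := cat_outParent hm f g c he i
          unfold Net.IsLeaf at hv
          omega
        · exact ⟨x, rfl⟩
      leafIn := cat_inLeaf hm f g c he }
  refine ⟨⟨hphylo, ?_⟩, cat_inDeg_le hm f g c he⟩
  intro v hv
  left
  refine ⟨cat_inDeg_le hm f g c he v, ?_⟩
  rcases v with i | i | x
  · exact cat_outSpine hm f g c i
  · exact cat_outParent hm f g c he i
  · exact absurd (cat_outLeaf hm f g c x) hv

lemma catT_hasCherry (i : Fin m) : (catT hm f g c).HasCherry (f i) (g i) :=
  ⟨cat_fg f g c he i i, .inr (.inl i), Or.inl rfl, Or.inr rfl⟩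

lemma catT_cherries : (catT hm f g c).cherries = {q | ∃ i, q = s(f i, g i)} := by
  ext q
  constructor
  · rintro ⟨x, y, rfl, hxy, p, hpx, hpy⟩
    rcases p with j | j | z
    · have hx : x = c := hpx.2
      have hy : y = c := hpy.2
      exact absurd (hx.trans hy.symm) hxy
    · rcases hpx with hx | hx <;> rcases hpy with hy | hy
      · exact absurd (hx.trans hy.symm) hxy
      · exact ⟨j, by rw [hx, hy]⟩
      · exact ⟨j, by rw [hx, hy]; exact Sym2.eq_swap⟩
      · exact absurd (hx.trans hy.symm) hxy
    · exact absurd hpx (by simp [catT, catE])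
  · rintro ⟨i, rfl⟩
    exact ⟨f i, g i, rfl, catT_hasCherry hm f g c he i⟩

end CatTree

section Concrete
set_option linter.unusedVariables false
set_option maxHeartbeats 2000000

def cf0 (m : ℕ) : Fin m → Fin (2*m+1) := fun i => ⟨2*(i:ℕ), by have := i.isLt; omega⟩
def cg0 (m : ℕ) : Fin m → Fin (2*m+1) := fun i => ⟨2*(i:ℕ)+1, by have := i.isLt; omega⟩
def cc0 (m : ℕ) : Fin (2*m+1) := ⟨2*m, by omega⟩
def cf1 (m : ℕ) : Fin m → Fin (2*m+1) := fun i => ⟨2*(i:ℕ)+1, by have := i.isLt; omega⟩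
def cg1 (m : ℕ) : Fin m → Fin (2*m+1) := fun i => ⟨2*(i:ℕ)+2, by have := i.isLt; omega⟩
def cc1 (m : ℕ) : Fin (2*m+1) := ⟨0, by omega⟩
def cf2 (m : ℕ) : Fin m → Fin (2*m+1) := fun i => ⟨(i:ℕ), by have := i.isLt; omega⟩
def cg2 (m : ℕ) : Fin m → Fin (2*m+1) := fun i => ⟨(i:ℕ)+m, by have := i.isLt; omega⟩
def cc2 (m : ℕ) : Fin (2*m+1) := ⟨2*m, by omega⟩
def cf3 (m : ℕ) : Fin m → Fin (2*m+1) := fun i => ⟨(i:ℕ), by have := i.isLt; omega⟩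
def cg3 (m : ℕ) : Fin m → Fin (2*m+1) := fun i => ⟨(i:ℕ)+m+1, by have := i.isLt; omega⟩
def cc3 (m : ℕ) : Fin (2*m+1) := ⟨m, by omega⟩

abbrev katK (m : ℕ) : Type := (Fin m ⊕ Fin m) ⊕ (Fin m ⊕ Fin m)

def katA (m : ℕ) : katK m → Fin (2*m+1)
  | .inl (.inl i) => cf0 m i
  | .inl (.inr i) => cf1 m i
  | .inr (.inl i) => cf2 m i
  | .inr (.inr i) => cf3 m i

def katB (m : ℕ) : katK m → Fin (2*m+1)
  | .inl (.inl i) => cg0 m i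
  | .inl (.inr i) => cg1 m i
  | .inr (.inl i) => cg2 m i
  | .inr (.inr i) => cg3 m i

lemma kat_bij0 (m : ℕ) : Function.Bijective (catCode (cf0 m) (cg0 m) (cc0 m)) := by
  rw [Fintype.bijective_iff_injective_and_card]
  constructor
  · intro z z' h
    rcases z with i | i | ⟨⟩ <;> rcases z' with j | j | ⟨⟩ <;>
      simp only [catCode, cf0, cg0, cc0, Fin.mk.injEq] at h ⊢ <;>
      (try simp only [Sum.inl.injEq, Sum.inr.injEq, Fin.ext_iff]) <;>
      first
        | rfl
        | (have := i.isLt; have := j.isLt; omega)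
        | (have := i.isLt; omega)
        | (have := j.isLt; omega)
        | omega
  · simp; omega

lemma kat_bij1 (m : ℕ) : Function.Bijective (catCode (cf1 m) (cg1 m) (cc1 m)) := by
  rw [Fintype.bijective_iff_injective_and_card]
  constructor
  · intro z z' h
    rcases z with i | i | ⟨⟩ <;> rcases z' with j | j | ⟨⟩ <;>
      simp only [catCode, cf1, cg1, cc1, Fin.mk.injEq] at h ⊢ <;>
      (try simp only [Sum.inl.injEq, Sum.inr.injEq, Fin.ext_iff]) <;>
      first
        | rfl
        | (have := i.isLt; have := j.isLt; omega)
        | (have := i.isLt; omega)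
        | (have := j.isLt; omega)
        | omega
  · simp; omega

lemma kat_bij2 (m : ℕ) : Function.Bijective (catCode (cf2 m) (cg2 m) (cc2 m)) := by
  rw [Fintype.bijective_iff_injective_and_card]
  constructor
  · intro z z' h
    rcases z with i | i | ⟨⟩ <;> rcases z' with j | j | ⟨⟩ <;>
      simp only [catCode, cf2, cg2, cc2, Fin.mk.injEq] at h ⊢ <;>
      (try simp only [Sum.inl.injEq, Sum.inr.injEq, Fin.ext_iff]) <;>
      first
        | rfl
        | (have := i.isLt; have := j.isLt; omega)
        | (have := i.isLt; omega)
        | (have := j.isLt; omega)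
        | omega
  · simp; omega

lemma kat_bij3 (m : ℕ) : Function.Bijective (catCode (cf3 m) (cg3 m) (cc3 m)) := by
  rw [Fintype.bijective_iff_injective_and_card]
  constructor
  · intro z z' h
    rcases z with i | i | ⟨⟩ <;> rcases z' with j | j | ⟨⟩ <;>
      simp only [catCode, cf3, cg3, cc3, Fin.mk.injEq] at h ⊢ <;>
      (try simp only [Sum.inl.injEq, Sum.inr.injEq, Fin.ext_iff]) <;>
      first
        | rfl
        | (have := i.isLt; have := j.isLt; omega)
        | (have := i.isLt; omega)
        | (have := j.isLt; omega)
        | omega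
  · simp; omega

lemma kat_dist (m : ℕ) (hm2 : 2 ≤ m) : ∀ z z' : katK m,
    s(katA m z, katB m z) = s(katA m z', katB m z') → z = z' := by
  intro z z' h
  rcases z with (i | i) | (i | i) <;> rcases z' with (j | j) | (j | j) <;>
    simp only [katA, katB] at h <;>
    rw [Sym2.eq_iff] at h <;>
    simp only [cf0, cg0, cf1, cg1, cf2, cg2, cf3, cg3, Fin.mk.injEq] at h <;>
    (try simp only [Sum.inl.injEq, Sum.inr.injEq, Fin.ext_iff]) <;>
    (have := i.isLt; have := j.isLt; omega)

end Concrete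


set_option maxHeartbeats 2000000 in
/-- For every odd `n ≥ 5` there exist four binary phylogenetic trees on `n` taxa that cannot be
co-displayed in any binary tree-child network; in particular their union has `2n - 2` distinct
cherries. -/
theorem stmt_12 (n : ℕ) (hn : 5 ≤ n) (hodd : Odd n) :
    ∃ (V1 V2 V3 V4 : Type) (T1 : Net V1 (Fin n)) (T2 : Net V2 (Fin n))
      (T3 : Net V3 (Fin n)) (T4 : Net V4 (Fin n)),
      Finite V1 ∧ Finite V2 ∧ Finite V3 ∧ Finite V4 ∧
      T1.IsBinaryTree ∧ T2.IsBinaryTree ∧ T3.IsBinaryTree ∧ T4.IsBinaryTree ∧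
      (Net.cherries T1 ∪ Net.cherries T2 ∪ Net.cherries T3 ∪ Net.cherries T4).ncard
        = 2 * n - 2 ∧
      ∀ (V : Type) (N : Net V (Fin n)), Finite V → N.IsBinaryNet → N.TreeChild →
        ¬ (Display T1 N ∧ Display T2 N ∧ Display T3 N ∧ Display T4 N) := by

  obtain ⟨m, rfl⟩ : ∃ m, n = 2 * m + 1 := by
    obtain ⟨k, hk⟩ := hodd
    exact ⟨k, by omega⟩
  have hm : 0 < m := by omega
  have hm2 : 2 ≤ m := by omega
  refine ⟨catV m (2*m+1), catV m (2*m+1), catV m (2*m+1), catV m (2*m+1),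
    catT hm (cf0 m) (cg0 m) (cc0 m), catT hm (cf1 m) (cg1 m) (cc1 m),
    catT hm (cf2 m) (cg2 m) (cc2 m), catT hm (cf3 m) (cg3 m) (cc3 m),
    inferInstance, inferInstance, inferInstance, inferInstance,
    catT_isBinaryTree hm _ _ _ (kat_bij0 m), catT_isBinaryTree hm _ _ _ (kat_bij1 m),
    catT_isBinaryTree hm _ _ _ (kat_bij2 m), catT_isBinaryTree hm _ _ _ (kat_bij3 m),
    ?_, ?_⟩
  · -- cherry count
    have hU : (catT hm (cf0 m) (cg0 m) (cc0 m)).cherries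
        ∪ (catT hm (cf1 m) (cg1 m) (cc1 m)).cherries
        ∪ (catT hm (cf2 m) (cg2 m) (cc2 m)).cherries
        ∪ (catT hm (cf3 m) (cg3 m) (cc3 m)).cherries
        = (fun z : katK m => s(katA m z, katB m z)) '' Set.univ := by
      rw [catT_cherries hm _ _ _ (kat_bij0 m), catT_cherries hm _ _ _ (kat_bij1 m),
        catT_cherries hm _ _ _ (kat_bij2 m), catT_cherries hm _ _ _ (kat_bij3 m)]
      ext q
      simp only [Set.mem_union, Set.mem_setOf_eq, Set.image_univ, Set.mem_range]
      constructor
      · rintro (((⟨i, rfl⟩ | ⟨i, rfl⟩) | ⟨i, rfl⟩) | ⟨i, rfl⟩)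
        · exact ⟨.inl (.inl i), rfl⟩
        · exact ⟨.inl (.inr i), rfl⟩
        · exact ⟨.inr (.inl i), rfl⟩
        · exact ⟨.inr (.inr i), rfl⟩
      · rintro ⟨z, rfl⟩
        rcases z with (i | i) | (i | i)
        · exact Or.inl (Or.inl (Or.inl ⟨i, rfl⟩))
        · exact Or.inl (Or.inl (Or.inr ⟨i, rfl⟩))
        · exact Or.inl (Or.inr ⟨i, rfl⟩)
        · exact Or.inr ⟨i, rfl⟩
    rw [hU, Set.ncard_image_of_injective _ (fun z z' h => kat_dist m hm2 z z' h),
      Set.ncard_univ, Nat.card_eq_fintype_card]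
    simp
    omega
  · -- impossibility
    rintro V N finV hB hTC ⟨hD1, hD2, hD3, hD4⟩
    haveI := finV
    have hostk : ∀ z : katK m, ∃ v, Host N v (katA m z) (katB m z) := by
      intro z
      rcases z with (i | i) | (i | i)
      · obtain ⟨S, φ, h1, h2, h3, h4, h5, h6⟩ := hD1
        exact host_of_cherry hB hTC (catT_isBinaryTree hm _ _ _ (kat_bij0 m)) h1 h2 h3 h5 h6 h4
          (catT_hasCherry hm _ _ _ (kat_bij0 m) i)
      · obtain ⟨S, φ, h1, h2, h3, h4, h5, h6⟩ := hD2
        exact host_of_cherry hB hTC (catT_isBinaryTree hm _ _ _ (kat_bij1 m)) h1 h2 h3 h5 h6 h4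
          (catT_hasCherry hm _ _ _ (kat_bij1 m) i)
      · obtain ⟨S, φ, h1, h2, h3, h4, h5, h6⟩ := hD3
        exact host_of_cherry hB hTC (catT_isBinaryTree hm _ _ _ (kat_bij2 m)) h1 h2 h3 h5 h6 h4
          (catT_hasCherry hm _ _ _ (kat_bij2 m) i)
      · obtain ⟨S, φ, h1, h2, h3, h4, h5, h6⟩ := hD4
        exact host_of_cherry hB hTC (catT_isBinaryTree hm _ _ _ (kat_bij3 m)) h1 h2 h3 h5 h6 h4
          (catT_hasCherry hm _ _ _ (kat_bij3 m) i)
    exact no_host_family hB hTC (katA m) (katB m) (kat_dist m hm2) hostk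
      (by simp; omega) (by simp; omega)
end
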